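/- arXiv:2201.01193 — 10 statements merged into one kernel-verified Lean document; each statement's English description precedes it below -/
import Mathlib

section
/- Let D₊, D₋, H, S, p₀, pₙ, x form a pair of SBP operators of order q on [a,b]. Then S xʲ = 0 for every j = 0, …, q, where xʲ denotes the elementwise j-th power of x. -/
open Matrix

/-- A pair of SBP operators of order `q` on `[a,b]`:
(A) accuracy conditions, (B) `H` symmetric positive definite,
(C) `H D₊ + D₊ᵀ H = -p₀ p₀ᵀ + pₙ pₙᵀ + S` with `S` symmetric positive semidefinite,
(D) `H D₊ + D₋ᵀ H = -p₀ p₀ᵀ + pₙ pₙᵀ`, (E) the grid points are pairwise distinct. -/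
def IsSBP (n q : ℕ) (a b : ℝ)
    (Dp Dm H S : Matrix (Fin (n+1)) (Fin (n+1)) ℝ)
    (p0 pn x : Fin (n+1) → ℝ) : Prop :=
  (∀ j : ℕ, j ≤ q → Dp.mulVec (fun i => x i ^ j) = fun i => (j : ℝ) * x i ^ (j - 1)) ∧
  (∀ j : ℕ, j ≤ q → Dm.mulVec (fun i => x i ^ j) = fun i => (j : ℝ) * x i ^ (j - 1)) ∧
  (∀ j : ℕ, j ≤ q → p0 ⬝ᵥ (fun i => x i ^ j) = a ^ j) ∧
  (∀ j : ℕ, j ≤ q → pn ⬝ᵥ (fun i => x i ^ j) = b ^ j) ∧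
  H.PosDef ∧ S.PosSemidef ∧
  H * Dp + Dpᵀ * H = -(vecMulVec p0 p0) + vecMulVec pn pn + S ∧
  H * Dp + Dmᵀ * H = -(vecMulVec p0 p0) + vecMulVec pn pn ∧
  Function.Injective x

/-
Subtracting (D) from (C) gives `S = (D₊ - D₋)ᵀ H`; transposing, the symmetry of `S` and `H` turns
this into `S = H (D₊ - D₋)`. Both operators differentiate `xʲ` exactly for `j ≤ q`, so
`(D₊ - D₋) xʲ = 0` and hence `S xʲ = 0`.
-/

section

variable {ι R : Type*} [Fintype ι] [CommRing R] {Dp Dm H S B : Matrix ι ι R}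

theorem eq_transpose_sub_mul_of_add_eq (hC : H * Dp + Dpᵀ * H = B + S)
    (hD : H * Dp + Dmᵀ * H = B) : S = (Dp - Dm)ᵀ * H := by
  rw [transpose_sub, Matrix.sub_mul, ← add_sub_add_left_eq_sub _ _ (H * Dp), hC, hD,
    add_sub_cancel_left]

theorem eq_mul_sub_of_add_eq (hH : H.IsSymm) (hS : S.IsSymm)
    (hC : H * Dp + Dpᵀ * H = B + S) (hD : H * Dp + Dmᵀ * H = B) : S = H * (Dp - Dm) := by
  calc S = Sᵀ := hS.eq.symm
    _ = ((Dp - Dm)ᵀ * H)ᵀ := by rw [← eq_transpose_sub_mul_of_add_eq hC hD]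
    _ = H * (Dp - Dm) := by rw [transpose_mul, transpose_transpose, hH.eq]

theorem mulVec_eq_zero_of_add_eq (hH : H.IsSymm) (hS : S.IsSymm)
    (hC : H * Dp + Dpᵀ * H = B + S) (hD : H * Dp + Dmᵀ * H = B) {v : ι → R}
    (hv : Dp *ᵥ v = Dm *ᵥ v) : S *ᵥ v = 0 := by
  rw [eq_mul_sub_of_add_eq hH hS hC hD, ← mulVec_mulVec, sub_mulVec, hv, sub_self, mulVec_zero]

end

theorem sbp_S_annihilates_grid_powers_general {n q : ℕ} {a b : ℝ}
    (Dp Dm H S : Matrix (Fin (n+1)) (Fin (n+1)) ℝ) (p0 pn x : Fin (n+1) → ℝ)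
    (hsbp : IsSBP n q a b Dp Dm H S p0 pn x) :
    ∀ j : ℕ, j ≤ q → S.mulVec (fun i => x i ^ j) = 0 := by
  obtain ⟨hDp, hDm, -, -, hH, hS, hC, hD, -⟩ := hsbp
  intro j hj
  exact mulVec_eq_zero_of_add_eq (isHermitian_iff_isSymm.mp hH.isHermitian)
    (isHermitian_iff_isSymm.mp hS.isHermitian) hC hD ((hDp j hj).trans (hDm j hj).symm)

/-- `S xʲ = 0` for `j = 0, …, q`. -/
theorem sbp_S_annihilates_grid_powers {n q : ℕ} (hn : 1 ≤ n) (hq : 1 ≤ q) {a b : ℝ} (hab : a < b)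
    (Dp Dm H S : Matrix (Fin (n+1)) (Fin (n+1)) ℝ) (p0 pn x : Fin (n+1) → ℝ)
    (hsbp : IsSBP n q a b Dp Dm H S p0 pn x) :
    ∀ j : ℕ, j ≤ q → S.mulVec (fun i => x i ^ j) = 0 :=
  sbp_S_annihilates_grid_powers_general Dp Dm H S p0 pn x hsbp
end

section
/- Let D₊, D₋, H, S, p₀, pₙ, x form a pair of SBP operators of order q on [a,b], and set D̃₊ := D₊ + H⁻¹ p₀ p₀ᵀ. Then D̃₊ is invertible if and only if D₊ is nullspace consistent, i.e. if and only if the kernel of D₊ equals the span of the all-ones vector 1. -/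
open Matrix

lemma myVecMulVec_mulVec {m : Type*} [Fintype m] (w u v : m → ℝ) :
    (vecMulVec w u).mulVec v = (u ⬝ᵥ v) • w := by
  funext i
  simp [vecMulVec_apply, mulVec, dotProduct, Finset.mul_sum, mul_assoc, mul_comm, mul_left_comm]


/-- `D̃₊ := D₊ + H⁻¹ p₀ p₀ᵀ` is invertible iff `D₊` is nullspace consistent. -/
theorem sbp_Dtilde_invertible_iff_nullspace_consistent {n q : ℕ} (hn : 1 ≤ n) (hq : 1 ≤ q)
    {a b : ℝ} (hab : a < b)
    (Dp Dm H S : Matrix (Fin (n+1)) (Fin (n+1)) ℝ) (p0 pn x : Fin (n+1) → ℝ)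
    (hsbp : IsSBP n q a b Dp Dm H S p0 pn x) :
    IsUnit (Dp + H⁻¹ * vecMulVec p0 p0) ↔
      LinearMap.ker Dp.mulVecLin = Submodule.span ℝ {(fun _ => 1 : Fin (n+1) → ℝ)} := by
  obtain ⟨hA, -, hp0, -, hH, hS, hC, -, -⟩ := hsbp
  set M : Matrix (Fin (n+1)) (Fin (n+1)) ℝ := Dp + H⁻¹ * vecMulVec p0 p0 with hM
  -- basic facts
  have hHdet : IsUnit H.det := isUnit_iff_ne_zero.mpr (ne_of_gt hH.det_pos)
  have hHsym : Hᵀ = H := hH.1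
  have hone : Dp.mulVec (fun _ => (1:ℝ)) = 0 := by
    have := hA 0 (by omega)
    simp at this; exact this
  have hp01 : p0 ⬝ᵥ (fun _ => (1:ℝ)) = 1 := by
    have := hp0 0 (by omega)
    simpa using this
  -- M applied to a general vector
  have hMv : ∀ v, M.mulVec v = Dp.mulVec v + (p0 ⬝ᵥ v) • H⁻¹.mulVec p0 := by
    intro v
    rw [hM, add_mulVec, ← mulVec_mulVec, myVecMulVec_mulVec, mulVec_smul]
  -- the energy identity: H M + Mᵀ H = p0 p0ᵀ + pn pnᵀ + S
  have hE : H * M + Mᵀ * H = vecMulVec p0 p0 + vecMulVec pn pn + S := by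
    have hPT : (H⁻¹ * vecMulVec p0 p0)ᵀ = vecMulVec p0 p0 * H⁻¹ := by
      rw [transpose_mul, transpose_nonsing_inv, hHsym]
      congr 1
      funext i j
      simp [vecMulVec_apply, transpose_apply, mul_comm]
    rw [hM, transpose_add, hPT, mul_add, add_mul,
      Matrix.mul_nonsing_inv_cancel_left _ _ hHdet,
      Matrix.mul_assoc, Matrix.nonsing_inv_mul _ hHdet, Matrix.mul_one]
    have : H * Dp + vecMulVec p0 p0 + (Dpᵀ * H + vecMulVec p0 p0)
        = (H * Dp + Dpᵀ * H) + (vecMulVec p0 p0 + vecMulVec p0 p0) := by abel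
    rw [this, hC]; abel
  -- kernel vectors of M satisfy p0 ⬝ v = 0 and Dp v = 0
  have hker : ∀ v, M.mulVec v = 0 → p0 ⬝ᵥ v = 0 ∧ Dp.mulVec v = 0 := by
    intro v hv
    have hL : v ⬝ᵥ (H * M + Mᵀ * H).mulVec v = 0 := by
      rw [add_mulVec, dotProduct_add, ← mulVec_mulVec, hv, mulVec_zero, dotProduct_zero,
        ← mulVec_mulVec, dotProduct_mulVec, vecMul_transpose, hv, zero_dotProduct]
      ring
    have hR : v ⬝ᵥ (H * M + Mᵀ * H).mulVec v
        = (p0 ⬝ᵥ v) ^ 2 + (pn ⬝ᵥ v) ^ 2 + v ⬝ᵥ S.mulVec v := by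
      rw [hE, add_mulVec, add_mulVec, dotProduct_add, dotProduct_add,
        myVecMulVec_mulVec, myVecMulVec_mulVec, dotProduct_smul, dotProduct_smul]
      rw [dotProduct_comm v p0, dotProduct_comm v pn]
      ring_nf
    have hSnn : 0 ≤ v ⬝ᵥ S.mulVec v := by
      have := hS.dotProduct_mulVec_nonneg v
      simpa using this
    have h0 : (p0 ⬝ᵥ v) ^ 2 = 0 := by nlinarith [sq_nonneg (pn ⬝ᵥ v)]
    have hp0v : p0 ⬝ᵥ v = 0 := by
      exact pow_eq_zero_iff (two_ne_zero) |>.mp h0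
    refine ⟨hp0v, ?_⟩
    have := hMv v
    rw [hv, hp0v, zero_smul, add_zero] at this
    exact this.symm
  constructor
  · -- M invertible → ker Dp = span{1}
    intro hU
    have hMinv : M⁻¹ * M = 1 := nonsing_inv_mul M ((isUnit_iff_isUnit_det M).mp hU)
    apply le_antisymm
    · intro v hv
      have hDv : Dp.mulVec v = 0 := by simpa [mulVecLin_apply] using hv
      set c := p0 ⬝ᵥ v with hc
      have h1 : M.mulVec (v - c • (fun _ => (1:ℝ))) = 0 := by
        rw [mulVec_sub, mulVec_smul, hMv, hMv, hDv, hone, hp01, zero_add, zero_add, one_smul]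
        simp [hc]
      have h2 : v - c • (fun _ => (1:ℝ)) = 0 := by
        calc v - c • (fun _ => (1:ℝ)) = (M⁻¹ * M).mulVec (v - c • fun _ => (1:ℝ)) := by
              rw [hMinv, one_mulVec]
          _ = M⁻¹.mulVec (M.mulVec (v - c • fun _ => (1:ℝ))) := by rw [mulVec_mulVec]
          _ = 0 := by rw [h1, mulVec_zero]
      have : v = c • (fun _ => (1:ℝ)) := by
        have := sub_eq_zero.mp h2; exact this
      rw [this]
      exact Submodule.smul_mem _ c (Submodule.mem_span_singleton_self _)
    · rw [Submodule.span_le, Set.singleton_subset_iff]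
      simpa [LinearMap.mem_ker, mulVecLin_apply] using hone
  · -- ker Dp = span{1} → M invertible
    intro hkerDp
    rw [isUnit_iff_isUnit_det, isUnit_iff_ne_zero]
    intro hdet
    obtain ⟨v, hv0, hv⟩ := (Matrix.exists_mulVec_eq_zero_iff).mpr hdet
    obtain ⟨hp0v, hDv⟩ := hker v hv
    have hvmem : v ∈ LinearMap.ker Dp.mulVecLin := by
      simpa [LinearMap.mem_ker, mulVecLin_apply] using hDv
    rw [hkerDp, Submodule.mem_span_singleton] at hvmem
    obtain ⟨c, hc⟩ := hvmem
    rw [← hc] at hp0v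
    rw [dotProduct_smul, hp01, smul_eq_mul, mul_one] at hp0v
    apply hv0
    rw [← hc, hp0v, zero_smul]
end

section
/- Let D₊, D₋, H, S, p₀, pₙ, x form a pair of SBP operators of order q on [a,b], set D̃₊ := D₊ + H⁻¹ p₀ p₀ᵀ, and let (λ, w) with λ ∈ ℂ, 0 ≠ w ∈ ℂ^{n+1}, be an eigenpair of the complexification of D̃₊, i.e. D̃₊ w = λ w. Then Re(λ) ≥ 0. -/
open Matrix

section Aux

variable {m : Type*} [Fintype m]

lemma sbpAux_dot_vecMulVec (p x : m → ℝ) :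
    x ⬝ᵥ (vecMulVec p p).mulVec x = (p ⬝ᵥ x)^2 := by
  simp only [vecMulVec_apply, dotProduct, mulVec, Finset.mul_sum, Finset.sum_mul, sq]
  rw [Finset.sum_comm]
  exact Finset.sum_congr rfl fun i _ => Finset.sum_congr rfl fun j _ => by ring

lemma sbpAux_star_mulVec_map (M : Matrix m m ℝ) (w : m → ℂ) :
    star ((M.map (fun r => (r:ℂ))).mulVec w) = (M.map (fun r => (r:ℂ))).mulVec (star w) := by
  funext i
  simp [mulVec, dotProduct]

lemma sbpAux_re_star_dot (M : Matrix m m ℝ) (w : m → ℂ) :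
    (star w ⬝ᵥ (M.map (fun r => (r:ℂ))).mulVec w).re
      = (fun i => (w i).re) ⬝ᵥ M.mulVec (fun i => (w i).re)
        + (fun i => (w i).im) ⬝ᵥ M.mulVec (fun i => (w i).im) := by
  simp only [dotProduct, mulVec, map_apply, Pi.star_apply, Complex.re_sum, Finset.mul_sum]
  rw [← Finset.sum_add_distrib]
  refine Finset.sum_congr rfl fun i _ => ?_
  rw [← Finset.sum_add_distrib]
  refine Finset.sum_congr rfl fun j _ => ?_
  simp [Complex.mul_re, Complex.mul_im]

end Aux

/-- every eigenvalue of the complexification of `D̃₊` has nonnegative real part. -/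
theorem sbp_eigenvalue_re_nonneg {n q : ℕ} (hn : 1 ≤ n) (hq : 1 ≤ q) {a b : ℝ} (hab : a < b)
    (Dp Dm H S : Matrix (Fin (n+1)) (Fin (n+1)) ℝ) (p0 pn x : Fin (n+1) → ℝ)
    (hsbp : IsSBP n q a b Dp Dm H S p0 pn x)
    (lam : ℂ) (w : Fin (n+1) → ℂ) (hw : w ≠ 0)
    (heig : ((Dp + H⁻¹ * vecMulVec p0 p0).map (fun r => (r : ℂ))).mulVec w = lam • w) :
    0 ≤ lam.re := by
  obtain ⟨-, -, -, -, hH, hS, hC, -, -⟩ := hsbp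
  set A : Matrix (Fin (n+1)) (Fin (n+1)) ℝ := Dp + H⁻¹ * vecMulVec p0 p0 with hA
  set P0 := vecMulVec p0 p0 with hP0
  have hHdet : IsUnit H.det := isUnit_iff_ne_zero.mpr hH.det_pos.ne'
  have hHsymm : Hᵀ = H := by
    rw [← H.conjTranspose_eq_transpose_of_trivial]; exact hH.1
  have hP0symm : P0ᵀ = P0 := by
    ext i j; simp [hP0, vecMulVec_apply, mul_comm]
  -- the key matrix identity
  have hM : H * A + Aᵀ * H = P0 + vecMulVec pn pn + S := by
    have h1 : H * A = H * Dp + P0 := by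
      rw [hA, mul_add, Matrix.mul_nonsing_inv_cancel_left _ _ hHdet]
    have h2 : Aᵀ * H = Dpᵀ * H + P0 := by
      rw [hA, transpose_add, transpose_mul, hP0symm, Matrix.transpose_nonsing_inv, hHsymm,
        add_mul, Matrix.nonsing_inv_mul_cancel_right _ _ hHdet]
    rw [h1, h2,
      show H * Dp + P0 + (Dpᵀ * H + P0) = (H * Dp + Dpᵀ * H) + P0 + P0 from by abel, hC]
    abel
  -- the matrix on the right is positive semidefinite in the real quadratic-form sense
  have hMpsd : ∀ y : Fin (n+1) → ℝ, 0 ≤ y ⬝ᵥ (P0 + vecMulVec pn pn + S).mulVec y := by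
    intro y
    rw [add_mulVec, add_mulVec, dotProduct_add, dotProduct_add, hP0,
      sbpAux_dot_vecMulVec, sbpAux_dot_vecMulVec]
    have := hS.dotProduct_mulVec_nonneg y
    simp only [star_trivial] at this
    positivity
  -- complexify
  set c : ℝ → ℂ := fun r => (r:ℂ) with hc
  have hcr : c = ⇑Complex.ofRealHom := rfl
  set Ac := A.map c with hAc
  set Hc := H.map c with hHc
  have hd1 : star w ⬝ᵥ (Hc * Ac).mulVec w = lam * (star w ⬝ᵥ Hc.mulVec w) := by
    rw [← mulVec_mulVec, ← hAc] at *
    rw [show Ac.mulVec w = lam • w from heig, mulVec_smul, dotProduct_smul, smul_eq_mul]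
  have hd2 : star w ⬝ᵥ (Aᵀ.map c * Hc).mulVec w = (starRingEnd ℂ) lam * (star w ⬝ᵥ Hc.mulVec w) := by
    have htr : Aᵀ.map c = Acᵀ := by rw [hAc, transpose_map]
    rw [htr, ← mulVec_mulVec, dotProduct_mulVec, vecMul_transpose,
      ← sbpAux_star_mulVec_map, ← hAc, heig]
    rw [star_smul, smul_dotProduct, smul_eq_mul]
    rfl
  have hkey : lam * (star w ⬝ᵥ Hc.mulVec w) + (starRingEnd ℂ) lam * (star w ⬝ᵥ Hc.mulVec w)
      = star w ⬝ᵥ ((P0 + vecMulVec pn pn + S).map c).mulVec w := by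
    have hmm : Hc * Ac + Aᵀ.map c * Hc = (H * A + Aᵀ * H).map c := by
      have e : ∀ M : Matrix (Fin (n+1)) (Fin (n+1)) ℝ, M.map c = Complex.ofRealHom.mapMatrix M :=
        fun _ => rfl
      simp only [hHc, hAc, e, map_add, _root_.map_mul]
    rw [← hd1, ← hd2, ← dotProduct_add, ← add_mulVec, hmm, hM]
  -- take real parts
  set d := star w ⬝ᵥ Hc.mulVec w with hd
  have hre : 2 * lam.re * d.re = (star w ⬝ᵥ ((P0 + vecMulVec pn pn + S).map c).mulVec w).re := by
    rw [← hkey]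
    simp [Complex.add_re, Complex.mul_re, Complex.conj_re, Complex.conj_im]
    ring
  have hRHS : 0 ≤ (star w ⬝ᵥ ((P0 + vecMulVec pn pn + S).map c).mulVec w).re := by
    rw [sbpAux_re_star_dot]
    exact add_nonneg (hMpsd _) (hMpsd _)
  have hdpos : 0 < d.re := by
    rw [hd, hHc, sbpAux_re_star_dot]
    have hwre : (fun i => (w i).re) ≠ 0 ∨ (fun i => (w i).im) ≠ 0 := by
      by_contra h
      push_neg at h
      apply hw
      funext i
      have h1 := congrFun h.1 i
      have h2 := congrFun h.2 i
      simp only [Pi.zero_apply] at h1 h2 ⊢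
      exact Complex.ext h1 h2
    have hq1 : ∀ y : Fin (n+1) → ℝ, 0 ≤ y ⬝ᵥ H.mulVec y := by
      intro y
      rcases eq_or_ne y 0 with rfl | hy
      · simp
      · have := hH.dotProduct_mulVec_pos hy
        simpa using this.le
    rcases hwre with h | h
    · have := hH.dotProduct_mulVec_pos h
      simp only [star_trivial] at this
      have h2 := hq1 (fun i => (w i).im)
      linarith
    · have := hH.dotProduct_mulVec_pos h
      simp only [star_trivial] at this
      have h2 := hq1 (fun i => (w i).re)
      linarith
  nlinarith [hre, hRHS, hdpos]
end

section
/- Let D₊, D₋, H, S, p₀, pₙ, x form a pair of SBP operators of order q on [a,b], set D̃₊ := D₊ + H⁻¹ p₀ p₀ᵀ, and let λ ∈ ℂ be an eigenvalue of the complexification of D̃₊ with Re(λ) = 0. Then the algebraic and geometric multiplicities of λ coincide; equivalently, the eigenspace ker(D̃₊ − λI) equals the generalized eigenspace of D̃₊ for λ. -/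
open Matrix

private lemma sbp_aux_psd_vecMulVec {m : ℕ} (v : Fin m → ℝ) : (vecMulVec v v).PosSemidef := by
  rw [posSemidef_iff_dotProduct_mulVec]
  constructor
  · ext i j
    simp [conjTranspose_apply, vecMulVec_apply, mul_comm]
  · intro y
    have h : (vecMulVec v v) *ᵥ y = (v ⬝ᵥ y) • v := by
      ext i
      simp only [mulVec, vecMulVec_apply, dotProduct, Pi.smul_apply, smul_eq_mul,
        Finset.sum_mul]
      exact Finset.sum_congr rfl fun x _ => by ring
    rw [h]
    simp only [star_trivial, dotProduct_smul, smul_eq_mul]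
    rw [dotProduct_comm]
    exact mul_self_nonneg _

open ComplexOrder in
private lemma sbp_aux_psd_map {m : ℕ} {M : Matrix (Fin m) (Fin m) ℝ} (hM : M.PosSemidef) :
    (M.map (fun r => (r:ℂ))).PosSemidef := by
  obtain ⟨B, rfl⟩ : ∃ B : Matrix (Fin m) (Fin m) ℝ, M = Bᴴ * B := by
    open scoped MatrixOrder in exact CStarAlgebra.nonneg_iff_eq_star_mul_self.mp hM.nonneg
  have h : (Bᴴ * B).map (fun r => (r:ℂ))
      = (B.map (fun r => (r:ℂ)))ᴴ * (B.map (fun r => (r:ℂ))) := by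
    have h2 : (Bᴴ * B).map ((Complex.ofRealHom : ℝ →+* ℂ) : ℝ → ℂ)
        = Bᴴ.map Complex.ofRealHom * B.map Complex.ofRealHom := Matrix.map_mul
    rw [show ((fun r => (r:ℂ)) : ℝ → ℂ) = ((Complex.ofRealHom : ℝ →+* ℂ) : ℝ → ℂ) from rfl, h2]
    congr 1
    ext i j
    simp [conjTranspose_apply, Complex.conj_ofReal]
  rw [h]
  exact posSemidef_conjTranspose_mul_self _

open ComplexOrder

/-- imaginary eigenvalues of `D̃₊` have equal algebraic and geometric multiplicity:
the eigenspace equals the generalized eigenspace. -/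
theorem sbp_imaginary_eigenvalue_semisimple {n q : ℕ} (hn : 1 ≤ n) (hq : 1 ≤ q)
    {a b : ℝ} (hab : a < b)
    (Dp Dm H S : Matrix (Fin (n+1)) (Fin (n+1)) ℝ) (p0 pn x : Fin (n+1) → ℝ)
    (hsbp : IsSBP n q a b Dp Dm H S p0 pn x)
    (lam : ℂ)
    (hlam : Module.End.HasEigenvalue
      ((Dp + H⁻¹ * vecMulVec p0 p0).map (fun r => (r : ℂ))).mulVecLin lam)
    (hre : lam.re = 0) :
    Module.End.eigenspace ((Dp + H⁻¹ * vecMulVec p0 p0).map (fun r => (r : ℂ))).mulVecLin lam =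
      Module.End.maxGenEigenspace
        ((Dp + H⁻¹ * vecMulVec p0 p0).map (fun r => (r : ℂ))).mulVecLin lam := by
  classical
  obtain ⟨hA1, hA2, hA3, hA4, hH, hS, hC, hD, hx⟩ := hsbp
  set A : Matrix (Fin (n+1)) (Fin (n+1)) ℝ := Dp + H⁻¹ * vecMulVec p0 p0 with hAdef
  set P : Matrix (Fin (n+1)) (Fin (n+1)) ℝ :=
    vecMulVec p0 p0 + vecMulVec pn pn + S with hPdef
  have hHdet : IsUnit H.det := isUnit_iff_ne_zero.mpr hH.det_pos.ne'
  have hHsymm : Hᵀ = H := by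
    have := hH.isHermitian
    simpa [Matrix.IsHermitian, conjTranspose_eq_transpose_of_trivial] using this
  have hvv : (vecMulVec p0 p0)ᵀ = vecMulVec p0 p0 := by
    ext i j; simp [vecMulVec_apply, transpose_apply, mul_comm]
  -- the key real matrix identity
  have hkey : H * A + Aᵀ * H = P := by
    have h1 : H * A = H * Dp + vecMulVec p0 p0 := by
      rw [hAdef, mul_add, ← mul_assoc, Matrix.mul_nonsing_inv _ hHdet, one_mul]
    have h2 : Aᵀ * H = Dpᵀ * H + vecMulVec p0 p0 := by
      rw [hAdef, transpose_add, transpose_mul, hvv, transpose_nonsing_inv, hHsymm,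
        add_mul, mul_assoc, Matrix.nonsing_inv_mul _ hHdet, mul_one]
    rw [h1, h2, hPdef]
    have : H * Dp + vecMulVec p0 p0 + (Dpᵀ * H + vecMulVec p0 p0)
        = (H * Dp + Dpᵀ * H) + (vecMulVec p0 p0 + vecMulVec p0 p0) := by abel
    rw [this, hC]
    abel
  have hPpsd : P.PosSemidef := by
    rw [hPdef]
    exact ((sbp_aux_psd_vecMulVec p0).add (sbp_aux_psd_vecMulVec pn)).add hS
  -- complexification
  set f : ℝ → ℂ := fun r => (r : ℂ) with hf
  set Ac := A.map f
  set Hc := H.map f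
  set Pc := P.map f
  have hmapmul : ∀ X Y : Matrix (Fin (n+1)) (Fin (n+1)) ℝ, (X*Y).map f = X.map f * Y.map f := by
    intro X Y
    exact Matrix.map_mul (f := Complex.ofRealHom)
  have hmapadd : ∀ X Y : Matrix (Fin (n+1)) (Fin (n+1)) ℝ, (X+Y).map f = X.map f + Y.map f := by
    intro X Y; ext i j; simp [hf]
  have hconjT : (Ac)ᴴ = (Aᵀ).map f := by
    ext i j
    simp [Ac, conjTranspose_apply, Complex.conj_ofReal, hf]
  have hkeyC : Hc * Ac + Acᴴ * Hc = Pc := by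
    rw [hconjT]
    show H.map f * A.map f + (Aᵀ).map f * H.map f = P.map f
    rw [← hmapmul, ← hmapmul, ← hmapadd, hkey]
  have hPcpsd : Pc.PosSemidef := sbp_aux_psd_map hPpsd
  have hHcpsd : Hc.PosSemidef := sbp_aux_psd_map hH.posSemidef
  have hHcdet : IsUnit Hc.det := by
    have : Hc.det = (H.det : ℂ) := (RingHom.map_det Complex.ofRealHom H).symm
    rw [this]
    exact isUnit_iff_ne_zero.mpr (Complex.ofReal_ne_zero.mpr hH.det_pos.ne')
  have hconjlam : (starRingEnd ℂ) lam = -lam := by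
    apply Complex.ext <;> simp [hre]
  -- the core semisimplicity computation
  have core : ∀ v : Fin (n+1) → ℂ,
      Ac *ᵥ (Ac *ᵥ v - lam • v) = lam • (Ac *ᵥ v - lam • v) → Ac *ᵥ v - lam • v = 0 := by
    intro v hw
    set w := Ac *ᵥ v - lam • v with hwdef
    have t2' : ∀ u : Fin (n+1) → ℂ, star w ⬝ᵥ (Acᴴ * Hc) *ᵥ u = -lam * (star w ⬝ᵥ Hc *ᵥ u) := by
      intro u
      rw [← mulVec_mulVec, dotProduct_mulVec, ← star_mulVec, hw, star_smul,
        smul_dotProduct]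
      simp [hconjlam, Complex.star_def, smul_eq_mul]
    -- quadratic form of Pc on w vanishes
    have hq : star w ⬝ᵥ Pc *ᵥ w = 0 := by
      have hsplit : star w ⬝ᵥ Pc *ᵥ w
          = star w ⬝ᵥ (Hc * Ac) *ᵥ w + star w ⬝ᵥ (Acᴴ * Hc) *ᵥ w := by
        rw [← hkeyC, add_mulVec, dotProduct_add]
      have t1 : star w ⬝ᵥ (Hc * Ac) *ᵥ w = lam * (star w ⬝ᵥ Hc *ᵥ w) := by
        rw [← mulVec_mulVec, hw, mulVec_smul, dotProduct_smul, smul_eq_mul]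
      rw [hsplit, t1, t2' w]
      ring
    have hPw : Pc *ᵥ w = 0 := (hPcpsd.dotProduct_mulVec_zero_iff w).mp hq
    -- quadratic form of Hc on w vanishes
    have hq2 : star w ⬝ᵥ Hc *ᵥ w = 0 := by
      have e1 : star w ⬝ᵥ Hc *ᵥ w
          = star w ⬝ᵥ Hc *ᵥ (Ac *ᵥ v) - lam * (star w ⬝ᵥ Hc *ᵥ v) := by
        rw [hwdef, mulVec_sub, mulVec_smul, dotProduct_sub, dotProduct_smul, smul_eq_mul]
      have e2 : star w ⬝ᵥ Hc *ᵥ (Ac *ᵥ v) = star w ⬝ᵥ Pc *ᵥ v - star w ⬝ᵥ (Acᴴ * Hc) *ᵥ v := by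
        rw [mulVec_mulVec, show Hc * Ac = Pc - Acᴴ * Hc by rw [← hkeyC]; abel,
          sub_mulVec, dotProduct_sub]
      have e3 : star w ⬝ᵥ Pc *ᵥ v = 0 := by
        have hh : star w ᵥ* Pc = 0 := by
          rw [← hPcpsd.1, ← star_mulVec, hPw, star_zero]
        rw [dotProduct_mulVec, hh, zero_dotProduct]
      rw [e1, e2, e3, t2' v]
      ring
    have hHw : Hc *ᵥ w = 0 := (hHcpsd.dotProduct_mulVec_zero_iff w).mp hq2
    have : w = (Hc⁻¹ * Hc) *ᵥ w := by rw [Matrix.nonsing_inv_mul _ hHcdet, one_mulVec]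
    rw [this, ← mulVec_mulVec, hHw, mulVec_zero]
  -- translate to endomorphism language
  set F := Ac.mulVecLin with hF
  have hg : ∀ u : Fin (n+1) → ℂ, (F - lam • (1 : Module.End ℂ (Fin (n+1) → ℂ))) u
      = Ac *ᵥ u - lam • u := by
    intro u
    simp [hF, Matrix.mulVecLin_apply]
  have coreF : ∀ k : ℕ, ∀ u : Fin (n+1) → ℂ,
      ((F - lam • (1 : Module.End ℂ (Fin (n+1) → ℂ))) ^ (k+1)) u = 0 →
      (F - lam • (1 : Module.End ℂ (Fin (n+1) → ℂ))) u = 0 := by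
    intro k
    induction k with
    | zero => intro u h; simpa using h
    | succ k ih =>
      intro u h
      have h2 : ((F - lam • (1 : Module.End ℂ (Fin (n+1) → ℂ))) ^ (k+1))
          ((F - lam • (1 : Module.End ℂ (Fin (n+1) → ℂ))) u) = 0 := by
        rw [← Module.End.mul_apply, ← pow_succ]
        exact h
      have h3 := ih _ h2
      rw [hg, hg] at h3
      rw [hg]
      exact core u (by rwa [← sub_eq_zero])
  apply le_antisymm
  · exact Module.End.genEigenspace_le_maximal F lam 1
  · intro v hv
    rw [Module.End.mem_maxGenEigenspace] at hv
    obtain ⟨k, hk⟩ := hv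
    rw [Module.End.mem_eigenspace_iff]
    match k with
    | 0 =>
      simp only [pow_zero, Module.End.one_apply] at hk
      rw [hk]
      simp
    | k+1 =>
      have := coreF k v hk
      rw [hg] at this
      have : Ac *ᵥ v = lam • v := by rwa [sub_eq_zero] at this
      simpa [hF, Matrix.mulVecLin_apply] using this
end

section
/- Let A be a real (n+1)×(n+1) matrix and suppose there exists a symmetric positive definite real matrix X such that X A + Aᵀ X is positive semidefinite. Then for every eigenvalue λ ∈ ℂ of (the complexification of) A with Re(λ) = 0, all elementary divisors of λ are linear; equivalently, the eigenspace ker(A − λI) equals the generalized eigenspace of A for λ. -/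
open Matrix
open scoped ComplexOrder

private lemma realmap_conjTranspose {n : ℕ} (M : Matrix (Fin (n+1)) (Fin (n+1)) ℝ) :
    (Mᵀ).map Complex.ofRealHom = (M.map Complex.ofRealHom)ᴴ := by
  ext i j
  simp [conjTranspose_apply, Complex.conj_ofReal]

private lemma realmap_conjTranspose' {n : ℕ} (M : Matrix (Fin (n+1)) (Fin (n+1)) ℝ) :
    (Mᴴ).map Complex.ofRealHom = (M.map Complex.ofRealHom)ᴴ := by
  ext i j
  simp [conjTranspose_apply, Complex.conj_ofReal]

private lemma realmap_posSemidef {n : ℕ} (M : Matrix (Fin (n+1)) (Fin (n+1)) ℝ)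
    (h : M.PosSemidef) : (M.map Complex.ofRealHom).PosSemidef := by
  obtain ⟨B, rfl⟩ : ∃ B : Matrix (Fin (n+1)) (Fin (n+1)) ℝ, M = Bᴴ * B := by
    open scoped MatrixOrder in exact CStarAlgebra.nonneg_iff_eq_star_mul_self.mp h.nonneg
  rw [Matrix.map_mul (f := Complex.ofRealHom), realmap_conjTranspose']
  exact Matrix.posSemidef_conjTranspose_mul_self _

/-- key step: the kernel of `(f - λ)²` is contained in the kernel of `f - λ`. -/
private lemma key {n : ℕ}
    (A X : Matrix (Fin (n+1)) (Fin (n+1)) ℝ)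
    (hX : X.PosDef) (hXA : (X * A + Aᵀ * X).PosSemidef)
    (lam : ℂ) (hre : lam.re = 0)
    (v : Fin (n+1) → ℂ)
    (hv2 : (A.map Complex.ofRealHom) *ᵥ ((A.map Complex.ofRealHom) *ᵥ v - lam • v)
            - lam • ((A.map Complex.ofRealHom) *ᵥ v - lam • v) = 0) :
    (A.map Complex.ofRealHom) *ᵥ v - lam • v = 0 := by
  set Ac := A.map Complex.ofRealHom with hAc
  set Xc := X.map Complex.ofRealHom with hXc
  set w := Ac *ᵥ v - lam • v with hw
  have hAw : Ac *ᵥ w = lam • w := by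
    have := hv2
    rw [sub_eq_zero] at this
    exact this
  set Mc := (X * A + Aᵀ * X).map Complex.ofRealHom with hMc
  have hMcPSD : Mc.PosSemidef := realmap_posSemidef _ hXA
  have hMceq : Mc = Xc * Ac + Acᴴ * Xc := by
    rw [hMc, Matrix.map_add _ (fun a b => by simp), Matrix.map_mul (f := Complex.ofRealHom),
      Matrix.map_mul (f := Complex.ofRealHom), realmap_conjTranspose]
  have hsum : lam + (starRingEnd ℂ) lam = 0 := by
    rw [Complex.add_conj, hre]
    simp
  have hXcUnit : IsUnit Xc := by
    rw [Matrix.isUnit_iff_isUnit_det,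
      show Xc = Complex.ofRealHom.mapMatrix X from rfl, ← RingHom.map_det]
    simp only [RingHom.coe_coe, Complex.ofRealHom_eq_coe, isUnit_iff_ne_zero, ne_eq,
      Complex.ofReal_eq_zero]
    exact hX.det_pos.ne'
  have hAdj : ∀ x : Fin (n+1) → ℂ, star w ⬝ᵥ (Acᴴ *ᵥ x) = (starRingEnd ℂ) lam * (star w ⬝ᵥ x) := by
    intro x
    have h1 : star w ᵥ* Acᴴ = star (Ac *ᵥ w) := (star_mulVec Ac w).symm
    rw [dotProduct_mulVec, h1, hAw, star_smul, smul_dotProduct]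
    rfl
  have hQ : ∀ x : Fin (n+1) → ℂ, star w ⬝ᵥ (Mc *ᵥ x)
      = star w ⬝ᵥ (Xc *ᵥ (Ac *ᵥ x)) + (starRingEnd ℂ) lam * (star w ⬝ᵥ (Xc *ᵥ x)) := by
    intro x
    rw [hMceq, Matrix.add_mulVec, dotProduct_add, ← Matrix.mulVec_mulVec, ← Matrix.mulVec_mulVec,
      hAdj]
  have hMw0 : Mc *ᵥ w = 0 := by
    rw [← hMcPSD.dotProduct_mulVec_zero_iff, hQ, hAw, Matrix.mulVec_smul, dotProduct_smul]
    rw [smul_eq_mul, ← add_mul, hsum, zero_mul]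
  have hMv : star w ⬝ᵥ (Mc *ᵥ v) = 0 := by
    have h1 : star w ᵥ* Mc = star (Mc *ᵥ w) := by
      rw [star_mulVec, hMcPSD.isHermitian.eq]
    rw [dotProduct_mulVec, h1, hMw0]
    simp
  have hXw0 : star w ⬝ᵥ (Xc *ᵥ w) = 0 := by
    have h0 := hMv
    rw [hQ] at h0
    have hAv : Ac *ᵥ v = w + lam • v := by rw [hw]; abel
    rw [hAv, Matrix.mulVec_add, dotProduct_add, Matrix.mulVec_smul, dotProduct_smul] at h0
    have h2 : star w ⬝ᵥ (Xc *ᵥ w) + (lam + (starRingEnd ℂ) lam) * (star w ⬝ᵥ (Xc *ᵥ v)) = 0 := by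
      rw [add_mul]
      rw [smul_eq_mul] at h0
      linear_combination h0
    rwa [hsum, zero_mul, add_zero] at h2
  have hXcPSD : Xc.PosSemidef := realmap_posSemidef _ hX.posSemidef
  have hXcw : Xc *ᵥ w = 0 := (hXcPSD.dotProduct_mulVec_zero_iff w).mp hXw0
  have hinj := Matrix.mulVec_injective_iff_isUnit.mpr hXcUnit
  exact hinj (a₁ := w) (a₂ := 0) (by rw [hXcw, Matrix.mulVec_zero])

/-- if `X A + Aᵀ X ≥ 0` for some symmetric positive definite `X`, then every
imaginary eigenvalue of `A` has linear elementary divisors: its eigenspace equals its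
generalized eigenspace. -/
theorem imaginary_eigenvalue_semisimple_of_lyapunov {n : ℕ}
    (A X : Matrix (Fin (n+1)) (Fin (n+1)) ℝ)
    (hX : X.PosDef) (hXA : (X * A + Aᵀ * X).PosSemidef)
    (lam : ℂ)
    (hlam : Module.End.HasEigenvalue (A.map (fun r => (r : ℂ))).mulVecLin lam)
    (hre : lam.re = 0) :
    Module.End.eigenspace (A.map (fun r => (r : ℂ))).mulVecLin lam =
      Module.End.maxGenEigenspace (A.map (fun r => (r : ℂ))).mulVecLin lam := by
  set f := (A.map (fun r => (r : ℂ))).mulVecLin with hf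
  set g : Module.End ℂ (Fin (n+1) → ℂ) := f - lam • 1 with hg
  have hAcmap : A.map (fun r => (r : ℂ)) = A.map Complex.ofRealHom := rfl
  have hgapp : ∀ x, g x = (A.map Complex.ofRealHom) *ᵥ x - lam • x := by
    intro x
    simp [hg, hf, hAcmap, Matrix.mulVecLin_apply]
  have hkey : ∀ x, g (g x) = 0 → g x = 0 := by
    intro x hx
    rw [hgapp]
    refine key A X hX hXA lam hre x ?_
    rw [hgapp, hgapp] at hx
    exact hx
  have hker : ∀ k : ℕ, ∀ x, (g ^ k) x = 0 → g x = 0 := by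
    intro k
    induction k with
    | zero => intro x hx; simp only [pow_zero, Module.End.one_apply] at hx; simp [hx]
    | succ k ih =>
      intro x hx
      rw [pow_succ, Module.End.mul_apply] at hx
      exact hkey x (ih (g x) hx)
  apply le_antisymm
  · exact Module.End.genEigenspace_le_maximal f lam 1
  · intro x hx
    rw [Module.End.mem_maxGenEigenspace] at hx
    obtain ⟨k, hk⟩ := hx
    rw [Module.End.mem_eigenspace_iff]
    have := hker k x hk
    rw [hgapp] at this
    rw [sub_eq_zero] at this
    simpa [hf, hAcmap] using this
end

section
/- Let D₊, D₋, H, S, p₀, pₙ, x form a pair of SBP operators of order q on [a,b] with D₊ nullspace consistent, set D̃₊ := D₊ + H⁻¹ p₀ p₀ᵀ, and let (λ, w) with λ ∈ ℂ, 0 ≠ w ∈ ℂ^{n+1}, satisfy D̃₊ w = λ w and Re(λ) = 0. Then ⟨xʲ, w⟩ = (xʲ)ᵀ H w = 0 for every j = 0, …, q. -/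
open Matrix

section Aux
variable {m : ℕ}

lemma sbpAux_mulVec_ofReal (M : Matrix (Fin m) (Fin m) ℝ) (v : Fin m → ℝ) :
    (M.map (fun r => (r : ℂ))).mulVec (fun i => (v i : ℂ)) = fun i => ((M.mulVec v) i : ℂ) := by
  ext i
  simp [Matrix.mulVec, dotProduct]

lemma sbpAux_star_mulVec (M : Matrix (Fin m) (Fin m) ℝ) (w : Fin m → ℂ) :
    star ((M.map (fun r => (r : ℂ))).mulVec w) = (M.map (fun r => (r : ℂ))).mulVec (star w) := by
  ext i
  simp [Matrix.mulVec, dotProduct, Pi.star_apply]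

lemma sbpAux_map_mul (M N : Matrix (Fin m) (Fin m) ℝ) :
    (M * N).map (fun r => (r : ℂ)) = M.map (fun r => (r : ℂ)) * N.map (fun r => (r : ℂ)) := by
  ext i j
  simp [Matrix.mul_apply]

lemma sbpAux_map_transpose (M : Matrix (Fin m) (Fin m) ℝ) :
    (Mᵀ).map (fun r => (r : ℂ)) = (M.map (fun r => (r : ℂ)))ᵀ := by
  ext i j; simp

lemma sbpAux_map_vecMulVec (u v : Fin m → ℝ) :
    (vecMulVec u v).map (fun r => (r : ℂ)) = vecMulVec (fun i => (u i : ℂ)) (fun i => (v i : ℂ)) := by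
  ext i j; simp [vecMulVec_apply]

lemma sbpAux_vecMulVec_mulVec (u v w : Fin m → ℂ) :
    (vecMulVec u v).mulVec w = (v ⬝ᵥ w) • u := by
  ext i
  simp only [Matrix.mulVec, dotProduct, vecMulVec_apply, Pi.smul_apply, smul_eq_mul,
    Finset.sum_mul]
  exact Finset.sum_congr rfl fun j _ => by ring

lemma sbpAux_star_dot_self (v : Fin m → ℂ) :
    star v ⬝ᵥ v = ((∑ i, Complex.normSq (v i) : ℝ) : ℂ) := by
  push_cast
  simp only [dotProduct, Pi.star_apply, Complex.normSq_eq_conj_mul_self]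
  rfl

end Aux

/-- eigenvectors of imaginary eigenvalues of `D̃₊` are `H`-orthogonal to the grid
monomials `xʲ`, `j = 0, …, q`, when `D₊` is nullspace consistent. -/
theorem sbp_imaginary_eigenvector_orthogonal_to_grid {n q : ℕ} (hn : 1 ≤ n) (hq : 1 ≤ q)
    {a b : ℝ} (hab : a < b)
    (Dp Dm H S : Matrix (Fin (n+1)) (Fin (n+1)) ℝ) (p0 pn x : Fin (n+1) → ℝ)
    (hsbp : IsSBP n q a b Dp Dm H S p0 pn x)
    (hnull : LinearMap.ker Dp.mulVecLin = Submodule.span ℝ {(fun _ => 1 : Fin (n+1) → ℝ)})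
    (lam : ℂ) (w : Fin (n+1) → ℂ) (hw : w ≠ 0)
    (heig : ((Dp + H⁻¹ * vecMulVec p0 p0).map (fun r => (r : ℂ))).mulVec w = lam • w)
    (hre : lam.re = 0) :
    ∀ j : ℕ, j ≤ q → (fun i => (x i ^ j : ℂ)) ⬝ᵥ (H.map (fun r => (r : ℂ))).mulVec w = 0 := by
  obtain ⟨hA1, hA2, hA3, hA4, hH, hS, hC, hD, hx⟩ := hsbp
  have hHdet : IsUnit H.det := isUnit_iff_ne_zero.mpr (ne_of_gt hH.det_pos)
  have hHsymm : Hᵀ = H := by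
    have := hH.1.eq
    ext i j
    have := congrFun (congrFun this i) j
    simpa [Matrix.conjTranspose_apply] using this
  set Dt := Dp + H⁻¹ * vecMulVec p0 p0 with hDt
  -- matrix identity: H * Dt + Dtᵀ * H = p0p0 + pnpn + S
  have hPT : (vecMulVec p0 p0)ᵀ = vecMulVec p0 p0 := by
    ext i j; simp [vecMulVec_apply, Matrix.transpose_apply, mul_comm]
  have hHD : H * Dt = H * Dp + vecMulVec p0 p0 := by
    rw [hDt, Matrix.mul_add, ← Matrix.mul_assoc, Matrix.mul_nonsing_inv _ hHdet, Matrix.one_mul]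
  have hDT : Dtᵀ * H = Dpᵀ * H + vecMulVec p0 p0 := by
    rw [hDt, Matrix.transpose_add, Matrix.transpose_mul, hPT, Matrix.transpose_nonsing_inv, hHsymm,
        Matrix.add_mul, Matrix.mul_assoc, Matrix.nonsing_inv_mul _ hHdet, Matrix.mul_one]
  have hKey : H * Dt + Dtᵀ * H = vecMulVec p0 p0 + vecMulVec pn pn + S := by
    rw [hHD, hDT, add_add_add_comm, hC]; abel
  -- complexifications
  set cw := fun (v : Fin (n+1) → ℝ) => (fun i => (v i : ℂ)) with hcw
  set cH := H.map (fun r => (r : ℂ)) with hcH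
  set cDt := Dt.map (fun r => (r : ℂ)) with hcDt
  -- quadratic form computation
  set φ := star w ⬝ᵥ cH.mulVec w with hφ
  have key1 : star w ⬝ᵥ ((H * Dt + Dtᵀ * H).map (fun r => (r : ℂ))).mulVec w = 0 := by
    have h1 : (H * Dt + Dtᵀ * H).map (fun r => (r : ℂ))
        = cH * cDt + cDtᵀ * cH := by
      have hadd : (H * Dt + Dtᵀ * H).map (fun r => (r : ℂ))
          = (H * Dt).map (fun r => (r : ℂ)) + (Dtᵀ * H).map (fun r => (r : ℂ)) := by
        ext i j; simp
      rw [hadd, sbpAux_map_mul, sbpAux_map_mul, sbpAux_map_transpose, ← hcH, ← hcDt]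
    have t1 : star w ⬝ᵥ (cH * cDt).mulVec w = lam * φ := by
      rw [← Matrix.mulVec_mulVec, heig, Matrix.mulVec_smul, dotProduct_smul,
        smul_eq_mul, hφ]
    have t2 : star w ⬝ᵥ (cDtᵀ * cH).mulVec w = (starRingEnd ℂ) lam * φ := by
      rw [← Matrix.mulVec_mulVec, Matrix.dotProduct_mulVec, Matrix.vecMul_transpose]
      have h2 : cDt.mulVec (star w) = (starRingEnd ℂ) lam • star w := by
        rw [hcDt, ← sbpAux_star_mulVec, ← hcDt, heig, star_smul]
        rfl
      rw [h2, smul_dotProduct, smul_eq_mul, hφ]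
    rw [h1, Matrix.add_mulVec, dotProduct_add, t1, t2, ← add_mul]
    have : lam + (starRingEnd ℂ) lam = 0 := by
      rw [Complex.add_conj, hre]; norm_num
    rw [this, zero_mul]
  rw [hKey] at key1
  set α := (cw p0) ⬝ᵥ w with hα
  set β := (cw pn) ⬝ᵥ w with hβ
  obtain ⟨B, hB⟩ : ∃ B : Matrix (Fin (n+1)) (Fin (n+1)) ℝ, S = Bᵀ * B := by
    open scoped MatrixOrder in
    classical
    obtain ⟨X, hX, -, hXS⟩ := CFC.exists_sqrt_of_isSelfAdjoint_of_quasispectrumRestricts hS.isHermitian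
      (QuasispectrumRestricts.nnreal_of_nonneg hS.nonneg)
    refine ⟨X, ?_⟩
    have : Xᵀ = X := by simpa [IsSelfAdjoint, Matrix.star_eq_conjTranspose] using hX.star_eq
    rw [this, ← hXS]
  set y := (B.map (fun r => (r : ℂ))).mulVec w with hy
  have key2 : ((Complex.normSq α + Complex.normSq β + ∑ i, Complex.normSq (y i) : ℝ) : ℂ) = 0 := by
    rw [← key1]
    have hmap : (vecMulVec p0 p0 + vecMulVec pn pn + S).map (fun r => (r : ℂ))
        = vecMulVec (cw p0) (cw p0) + vecMulVec (cw pn) (cw pn)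
          + (B.map (fun r => (r : ℂ)))ᵀ * (B.map (fun r => (r : ℂ))) := by
      rw [hB]
      ext i j
      simp [Matrix.add_apply, vecMulVec_apply, Matrix.mul_apply, hcw]
    rw [hmap, Matrix.add_mulVec, Matrix.add_mulVec, dotProduct_add, dotProduct_add,
      sbpAux_vecMulVec_mulVec, sbpAux_vecMulVec_mulVec, dotProduct_smul,
      dotProduct_smul, ← Matrix.mulVec_mulVec, Matrix.dotProduct_mulVec,
      Matrix.vecMul_transpose]
    have hsw : ∀ v : Fin (n+1) → ℝ, star w ⬝ᵥ (cw v) = (starRingEnd ℂ) ((cw v) ⬝ᵥ w) := by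
      intro v
      simp [dotProduct, hcw, map_sum, mul_comm]
    have hyw : (B.map (fun r => (r : ℂ))).mulVec (star w) = star y := by
      rw [hy, sbpAux_star_mulVec]
    rw [hyw, sbpAux_star_dot_self, hsw p0, hsw pn, ← hα, ← hβ]
    push_cast [Complex.normSq_eq_conj_mul_self]
    simp only [smul_eq_mul]
    ring
  have hreal : Complex.normSq α + Complex.normSq β + ∑ i, Complex.normSq (y i) = 0 := by
    exact_mod_cast key2
  have hsum : (0:ℝ) ≤ ∑ i, Complex.normSq (y i) :=
    Finset.sum_nonneg fun i _ => Complex.normSq_nonneg _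
  have hα0 : α = 0 := by
    have := Complex.normSq_nonneg α
    have := Complex.normSq_nonneg β
    have : Complex.normSq α = 0 := by nlinarith [Complex.normSq_nonneg α, Complex.normSq_nonneg β]
    exact Complex.normSq_eq_zero.mp this
  have hβ0 : β = 0 := by
    have : Complex.normSq β = 0 := by nlinarith [Complex.normSq_nonneg α, Complex.normSq_nonneg β]
    exact Complex.normSq_eq_zero.mp this
  -- eigen equation for Dp itself
  have heigDp : (Dp.map (fun r => (r : ℂ))).mulVec w = lam • w := by
    have hsplit : cDt = Dp.map (fun r => (r : ℂ)) + (H⁻¹ * vecMulVec p0 p0).map (fun r => (r : ℂ)) := by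
      rw [hcDt, hDt]; ext i j; simp [Matrix.add_apply]
    have h2 : ((H⁻¹ * vecMulVec p0 p0).map (fun r => (r : ℂ))).mulVec w = 0 := by
      rw [sbpAux_map_mul, ← Matrix.mulVec_mulVec, sbpAux_map_vecMulVec,
        sbpAux_vecMulVec_mulVec]
      have : (fun i => (p0 i : ℂ)) ⬝ᵥ w = 0 := hα0
      rw [this, zero_smul, Matrix.mulVec_zero]
    have := heig
    rw [hsplit, Matrix.add_mulVec, h2, add_zero] at this
    exact this
  -- lam ≠ 0
  have hlam : lam ≠ 0 := by
    intro h0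
    rw [h0, zero_smul] at heigDp
    -- real and imaginary parts are in ker Dp
    have hker : ∀ u : Fin (n+1) → ℝ, Dp.mulVec u = 0 → ∃ c : ℝ, u = fun _ => c := by
      intro u hu
      have : u ∈ LinearMap.ker Dp.mulVecLin := by
        simpa [Matrix.mulVecLin_apply] using hu
      rw [hnull, Submodule.mem_span_singleton] at this
      obtain ⟨c, hc⟩ := this
      exact ⟨c, by rw [← hc]; ext i; simp⟩
    have hru : Dp.mulVec (fun i => (w i).re) = 0 := by
      ext i
      have := congrFun heigDp i
      have hre' := congrArg Complex.re this
      simpa [Matrix.mulVec, dotProduct, Complex.re_sum, Complex.mul_re] using hre'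
    have hiu : Dp.mulVec (fun i => (w i).im) = 0 := by
      ext i
      have := congrFun heigDp i
      have him' := congrArg Complex.im this
      simpa [Matrix.mulVec, dotProduct, Complex.im_sum, Complex.mul_im] using him'
    obtain ⟨c, hc⟩ := hker _ hru
    obtain ⟨d, hd⟩ := hker _ hiu
    have hwc : ∀ i, w i = (⟨c, d⟩ : ℂ) := by
      intro i
      have h1 : (w i).re = c := congrFun hc i
      have h2 : (w i).im = d := congrFun hd i
      exact Complex.ext h1 h2
    have hp01 : p0 ⬝ᵥ (fun _ => (1:ℝ)) = 1 := by
      have := hA3 0 (Nat.zero_le q)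
      simpa using this
    have : α = (⟨c, d⟩ : ℂ) := by
      rw [hα, hcw]
      simp only [dotProduct]
      calc ∑ i, (p0 i : ℂ) * w i = ∑ i, (p0 i : ℂ) * (⟨c,d⟩:ℂ) := by
            exact Finset.sum_congr rfl fun i _ => by rw [hwc i]
        _ = ((∑ i, p0 i : ℝ) : ℂ) * (⟨c,d⟩:ℂ) := by push_cast; rw [Finset.sum_mul]
        _ = (⟨c,d⟩:ℂ) := by
            have : ∑ i, p0 i = 1 := by simpa [dotProduct] using hp01
            rw [this]; norm_num
    rw [hα0] at this
    apply hw
    ext1 i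
    rw [hwc i, ← this]
    rfl
  -- recursion
  have hrec : ∀ j : ℕ, j ≤ q →
      lam * ((fun i => (x i ^ j : ℂ)) ⬝ᵥ cH.mulVec w)
        = -(j : ℂ) * ((fun i => (x i ^ (j-1) : ℂ)) ⬝ᵥ cH.mulVec w) := by
    intro j hj
    have hHDp : H * Dp = -(vecMulVec p0 p0) + vecMulVec pn pn - Dmᵀ * H := by
      rw [← hD]; abel
    have e1 : (fun i => (x i ^ j : ℂ)) ⬝ᵥ cH.mulVec (lam • w)
        = lam * ((fun i => (x i ^ j : ℂ)) ⬝ᵥ cH.mulVec w) := by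
      rw [Matrix.mulVec_smul, dotProduct_smul, smul_eq_mul]
    rw [← e1, ← heigDp, Matrix.mulVec_mulVec, ← sbpAux_map_mul, hHDp]
    have hmap2 : (-(vecMulVec p0 p0) + vecMulVec pn pn - Dmᵀ * H).map (fun r => (r : ℂ))
        = -(vecMulVec (cw p0) (cw p0)) + vecMulVec (cw pn) (cw pn)
          - (Dm.map (fun r => (r : ℂ)))ᵀ * cH := by
      ext i j'
      simp [Matrix.sub_apply, Matrix.add_apply, Matrix.neg_apply, vecMulVec_apply,
        Matrix.mul_apply, hcw, hcH]
    have hβ0' : (cw pn) ⬝ᵥ w = 0 := hβ0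
    have hα0' : (cw p0) ⬝ᵥ w = 0 := hα0
    rw [hmap2]
    simp only [Matrix.sub_mulVec, Matrix.add_mulVec, Matrix.neg_mulVec,
      dotProduct_sub, dotProduct_add, dotProduct_neg,
      sbpAux_vecMulVec_mulVec, hα0', hβ0', zero_smul, dotProduct_zero,
      neg_zero, zero_add, zero_sub]
    rw [← Matrix.mulVec_mulVec, Matrix.dotProduct_mulVec, Matrix.vecMul_transpose]
    have hDmx : (Dm.map (fun r => (r : ℂ))).mulVec (fun i => (x i ^ j : ℂ))
        = (j : ℂ) • (fun i => (x i ^ (j-1) : ℂ)) := by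
      have h1 : (fun i => ((x i ^ j : ℝ) : ℂ)) = fun i => (x i ^ j : ℂ) := by
        ext i; push_cast; rfl
      have h2 : (fun i => (((j : ℝ) * x i ^ (j-1) : ℝ) : ℂ))
          = (j : ℂ) • (fun i => (x i ^ (j-1) : ℂ)) := by
        ext i; push_cast; simp
      have h3 := sbpAux_mulVec_ofReal Dm (fun i => x i ^ j)
      rw [hA2 j hj] at h3
      rw [← h1, h3]
      exact h2
    rw [hDmx, smul_dotProduct, smul_eq_mul]
    ring
  -- induction
  intro j hj
  induction j with
  | zero =>
    have := hrec 0 (Nat.zero_le q)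
    simp only [Nat.cast_zero, neg_zero, zero_mul] at this
    exact (mul_eq_zero.mp this).resolve_left hlam
  | succ k ih =>
    have hk : k ≤ q := Nat.le_of_succ_le hj
    have := hrec (k+1) hj
    rw [show k + 1 - 1 = k from rfl, ih hk, mul_zero] at this
    exact (mul_eq_zero.mp this).resolve_left hlam
end

section
/- Let H be a real symmetric positive definite (n+1)×(n+1) matrix, let A be a real (n+1)×(n+1) matrix, let (λ, w) with λ ∈ ℂ, 0 ≠ w ∈ ℂ^{n+1}, satisfy A w = λ w, let ε > 0, and set S' := ε·((H w)(H w)* + (H w̄)(H w̄)*). If w* H w̄ = 0 (i.e. w is H-orthogonal to its own conjugate), then (A + (1/2) H⁻¹ S') w = (λ + (ε/2)·‖w‖²_H) w, where ‖w‖²_H := w* H w; that is, adding the perturbation (1/2) H⁻¹ S' shifts the eigenvalue λ of eigenvector w by the positive real amount (ε/2)‖w‖²_H. -/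
/-! For invertible `H`, `H⁻¹ (H u)(H u)* w = ⟨u, w⟩_H u`. Hence `H⁻¹ S' w` is
`ε (‖w‖²_H w + ⟨w̄, w⟩_H w̄)`, and the second term vanishes because `⟨w̄, w⟩_H` is the conjugate
of `w* H w̄ = 0`. -/

open Matrix

namespace Matrix

variable {n : Type*} [Fintype n] {α : Type*} [CommRing α]

theorem inv_mul_vecMulVec_mulVec [DecidableEq n] {M : Matrix n n α} (hM : IsUnit M.det)
    (u v : n → α) :
    M⁻¹ * vecMulVec (M *ᵥ u) v = vecMulVec u v := by
  rw [mul_vecMulVec, mulVec_mulVec, nonsing_inv_mul M hM, one_mulVec]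

theorem IsHermitian.star_mulVec_dotProduct [StarRing α] {M : Matrix n n α} (hM : M.IsHermitian)
    (u v : n → α) : star (M *ᵥ u) ⬝ᵥ v = star u ⬝ᵥ M *ᵥ v := by
  rw [star_mulVec, hM.eq, dotProduct_mulVec]

theorem inv_mul_add_vecMulVec_mulVec_of_orthogonal_star [DecidableEq n] [StarRing α]
    {M : Matrix n n α} (hM : M.IsHermitian) (hdet : IsUnit M.det) {u : n → α}
    (horth : star u ⬝ᵥ M *ᵥ star u = 0) :
    (M⁻¹ * (vecMulVec (M *ᵥ u) (star (M *ᵥ u)) + vecMulVec (M *ᵥ star u) (star (M *ᵥ star u))))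
      *ᵥ u = (star u ⬝ᵥ M *ᵥ u) • u := by
  have hcross : star (M *ᵥ star u) ⬝ᵥ u = 0 := by
    rw [← star_star u, star_dotProduct_star, star_star, horth, star_zero]
  rw [Matrix.mul_add, inv_mul_vecMulVec_mulVec hdet, inv_mul_vecMulVec_mulVec hdet, add_mulVec,
    vecMulVec_mulVec, vecMulVec_mulVec, hcross, hM.star_mulVec_dotProduct, op_smul_eq_smul,
    MulOpposite.op_zero, zero_smul, add_zero]

end Matrix

theorem perturbation_shifts_eigenvalue_general {n : ℕ}
    (H A : Matrix (Fin (n+1)) (Fin (n+1)) ℝ) (hH : H.PosDef)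
    (lam : ℂ) (w : Fin (n+1) → ℂ)
    (heig : (A.map (fun r => (r : ℂ))).mulVec w = lam • w)
    (ε : ℝ)
    (horth : star w ⬝ᵥ (H.map (fun r => (r : ℂ))).mulVec (star w) = 0)
    (S' : Matrix (Fin (n+1)) (Fin (n+1)) ℂ)
    (hS' : S' = (ε : ℂ) •
      (vecMulVec ((H.map (fun r => (r : ℂ))).mulVec w)
          (star ((H.map (fun r => (r : ℂ))).mulVec w)) +
        vecMulVec ((H.map (fun r => (r : ℂ))).mulVec (star w))
          (star ((H.map (fun r => (r : ℂ))).mulVec (star w))))) :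
    (A.map (fun r => (r : ℂ)) + (2 : ℂ)⁻¹ • ((H.map (fun r => (r : ℂ)))⁻¹ * S')).mulVec w =
      (lam + ((ε : ℂ) / 2) * (star w ⬝ᵥ (H.map (fun r => (r : ℂ))).mulVec w)) • w := by
  have hHerm : (H.map (fun r => (r : ℂ))).IsHermitian :=
    hH.isHermitian.map _ fun r => (Complex.conj_ofReal r).symm
  have hdet : IsUnit (H.map (fun r => (r : ℂ))).det :=
    (isUnit_iff_isUnit_det _).mp (hH.isUnit.map Complex.ofRealHom.mapMatrix)
  rw [hS', Matrix.mul_smul, add_mulVec, smul_mulVec, smul_mulVec,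
    inv_mul_add_vecMulVec_mulVec_of_orthogonal_star hHerm hdet horth, heig, smul_smul, smul_smul,
    ← add_smul]
  congr 1
  ring

/-- adding `(1/2) H⁻¹ S'` with `S' = ε((Hw)(Hw)* + (Hw̄)(Hw̄)*)` shifts the
eigenvalue `λ` of the eigenvector `w` by `(ε/2)‖w‖²_H`, provided `w* H w̄ = 0`. -/
theorem perturbation_shifts_eigenvalue {n : ℕ}
    (H A : Matrix (Fin (n+1)) (Fin (n+1)) ℝ) (hH : H.PosDef)
    (lam : ℂ) (w : Fin (n+1) → ℂ) (hw : w ≠ 0)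
    (heig : (A.map (fun r => (r : ℂ))).mulVec w = lam • w)
    (ε : ℝ) (hε : 0 < ε)
    (horth : star w ⬝ᵥ (H.map (fun r => (r : ℂ))).mulVec (star w) = 0)
    (S' : Matrix (Fin (n+1)) (Fin (n+1)) ℂ)
    (hS' : S' = (ε : ℂ) •
      (vecMulVec ((H.map (fun r => (r : ℂ))).mulVec w)
          (star ((H.map (fun r => (r : ℂ))).mulVec w)) +
        vecMulVec ((H.map (fun r => (r : ℂ))).mulVec (star w))
          (star ((H.map (fun r => (r : ℂ))).mulVec (star w))))) :
    (A.map (fun r => (r : ℂ)) + (2 : ℂ)⁻¹ • ((H.map (fun r => (r : ℂ)))⁻¹ * S')).mulVec w =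
      (lam + ((ε : ℂ) / 2) * (star w ⬝ᵥ (H.map (fun r => (r : ℂ))).mulVec w)) • w :=
  perturbation_shifts_eigenvalue_general H A hH lam w heig ε horth S' hS'
end

section
/- Let D₊, D₋, H, S, p₀, pₙ, x form a pair of SBP operators of order q on [a,b] with D₊ nullspace consistent, and suppose D₊ does not have the eigenvalue property. Then for every ε > 0 there exists a real symmetric positive semidefinite matrix S' with S' xʲ = 0 for j = 0, …, q such that the matrix D'₊ := D₊ + (1/2) H⁻¹ S' satisfies: (i) ‖D'₊ − D₊‖ ≤ ε (in the operator norm), and (ii) every eigenvalue λ ∈ ℂ of D̃'₊ := D'₊ + H⁻¹ p₀ p₀ᵀ has Re(λ) > 0, i.e. D'₊ has the eigenvalue property. In particular, D'₊ together with D₋ − (1/2)H⁻¹S', H, S + S', p₀, pₙ, x is again a pair of SBP operators of order q on [a,b]. -/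
/-!
Let `D̃ = D₊ + H⁻¹p₀p₀ᵀ`. The SBP identity gives `H D̃ + D̃ᵀ H = p₀p₀ᵀ + pₙpₙᵀ + S ⪰ 0`, so for an
eigenpair `(λ, w)` of `D̃` with `Re λ ≤ 0` the real part of `w* (H D̃ + D̃ᵀ H) w = 2 Re λ · w* H w`
forces `p₀p₀ᵀ w = 0` and `S w = 0`, whence `D₊ w = λ w`. Perturbing by `S' = δ P`, where `P ⪰ 0`
has kernel exactly the grid values of polynomials of degree `≤ q`, keeps the SBP structure and makes
`S + S'` vanish only on such grid values. There `D₊` acts as differentiation, so it is nilpotent and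
`λ = 0`; then nullspace consistency puts `w` in `span {1}`, and `p₀ᵀ 1 = 1` gives `w = 0`.
-/

open Matrix

section

variable {ι : Type*} [Fintype ι]

namespace Matrix

variable {m : Type*}

lemma re_map_ofReal_mulVec (A : Matrix m ι ℝ) (w : ι → ℂ) (i : m) :
    ((A.map (↑) *ᵥ w) i).re = (A *ᵥ fun j => (w j).re) i := by
  simp [mulVec, dotProduct, Complex.re_sum]

lemma im_map_ofReal_mulVec (A : Matrix m ι ℝ) (w : ι → ℂ) (i : m) :
    ((A.map (↑) *ᵥ w) i).im = (A *ᵥ fun j => (w j).im) i := by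
  simp [mulVec, dotProduct, Complex.im_sum]

lemma map_ofReal_mulVec_eq_zero_iff (A : Matrix m ι ℝ) (w : ι → ℂ) :
    A.map (↑) *ᵥ w = 0 ↔ A *ᵥ (fun j => (w j).re) = 0 ∧ A *ᵥ (fun j => (w j).im) = 0 := by
  simp only [funext_iff, Complex.ext_iff, re_map_ofReal_mulVec, im_map_ofReal_mulVec,
    Pi.zero_apply, Complex.zero_re, Complex.zero_im, forall_and]

lemma map_ofReal_mul {o : Type*} (A : Matrix m ι ℝ) (B : Matrix ι o ℝ) :
    (A * B).map ((↑) : ℝ → ℂ) = A.map ((↑) : ℝ → ℂ) * B.map ((↑) : ℝ → ℂ) :=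
  Matrix.map_mul (f := Complex.ofRealHom)

lemma re_star_dotProduct_map_ofReal_mulVec (A : Matrix ι ι ℝ) (w : ι → ℂ) :
    (star w ⬝ᵥ A.map (↑) *ᵥ w).re
      = (fun j => (w j).re) ⬝ᵥ A *ᵥ (fun j => (w j).re)
        + (fun j => (w j).im) ⬝ᵥ A *ᵥ (fun j => (w j).im) := by
  simp only [dotProduct, Complex.re_sum, Pi.star_apply, Complex.star_def, Complex.mul_re,
    Complex.conj_re, Complex.conj_im, re_map_ofReal_mulVec, im_map_ofReal_mulVec,
    ← Finset.sum_add_distrib]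
  exact Finset.sum_congr rfl fun i _ => by ring

lemma PosSemidef.re_star_dotProduct_map_ofReal_mulVec_nonneg {A : Matrix ι ι ℝ}
    (hA : A.PosSemidef) (w : ι → ℂ) : 0 ≤ (star w ⬝ᵥ A.map (↑) *ᵥ w).re := by
  rw [re_star_dotProduct_map_ofReal_mulVec]
  exact add_nonneg (hA.dotProduct_mulVec_nonneg _) (hA.dotProduct_mulVec_nonneg _)

lemma PosSemidef.map_ofReal_mulVec_eq_zero_of_re_nonpos {A : Matrix ι ι ℝ} (hA : A.PosSemidef)
    {w : ι → ℂ} (hw : (star w ⬝ᵥ A.map (↑) *ᵥ w).re ≤ 0) : A.map (↑) *ᵥ w = 0 := by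
  rw [re_star_dotProduct_map_ofReal_mulVec] at hw
  have hre := hA.dotProduct_mulVec_nonneg fun j => (w j).re
  have him := hA.dotProduct_mulVec_nonneg fun j => (w j).im
  simp only [star_trivial] at hre him
  rw [map_ofReal_mulVec_eq_zero_iff, ← hA.dotProduct_mulVec_zero_iff,
    ← hA.dotProduct_mulVec_zero_iff, star_trivial, star_trivial]
  constructor <;> linarith

lemma re_star_dotProduct_lyapunov_mulVec {H M : Matrix ι ι ℝ} {w : ι → ℂ} {μ : ℂ}
    (h : M.map (↑) *ᵥ w = μ • w) :
    (star w ⬝ᵥ (H * M + Mᵀ * H).map (↑) *ᵥ w).re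
      = 2 * μ.re * (star w ⬝ᵥ H.map (↑) *ᵥ w).re := by
  have hMT : Mᵀ.map ((↑) : ℝ → ℂ) = (M.map (↑))ᴴ := by ext i j; simp
  have hHM : star w ⬝ᵥ (H.map (↑) * M.map (↑)) *ᵥ w = μ * (star w ⬝ᵥ H.map (↑) *ᵥ w) := by
    rw [← mulVec_mulVec, h, mulVec_smul, dotProduct_smul, smul_eq_mul]
  have hMH : star w ⬝ᵥ ((M.map (↑))ᴴ * H.map (↑)) *ᵥ w
      = star μ * (star w ⬝ᵥ H.map (↑) *ᵥ w) := by
    rw [← mulVec_mulVec, dotProduct_mulVec, ← star_mulVec, h, star_smul, smul_dotProduct,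
      smul_eq_mul]
  rw [Matrix.map_add _ Complex.ofReal_add, map_ofReal_mul, map_ofReal_mul, hMT, add_mulVec,
    dotProduct_add, hHM, hMH, ← add_mul, Complex.star_def, Complex.add_conj,
    Complex.re_ofReal_mul]

lemma pow_mulVec_of_mulVec_eq_smul {R : Type*} [CommSemiring R] [DecidableEq ι]
    {A : Matrix ι ι R} {w : ι → R} {μ : R} (h : A *ᵥ w = μ • w) (k : ℕ) :
    (A ^ k) *ᵥ w = μ ^ k • w := by
  induction k with
  | zero => simp
  | succ k ih => rw [pow_succ', ← mulVec_mulVec, ih, mulVec_smul, h, smul_smul, pow_succ]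

lemma transpose_nonsing_inv_mul_mul_self {R : Type*} [CommRing R] [DecidableEq ι]
    {H T : Matrix ι ι R} (hH : H.IsSymm) (hT : T.IsSymm) (h : IsUnit H.det) :
    (H⁻¹ * T)ᵀ * H = T := by
  rw [transpose_mul, hT.eq, transpose_nonsing_inv, hH.eq, mul_assoc, nonsing_inv_mul _ h,
    mul_one]

open scoped ComplexOrder in
lemma PosSemidef.mulVec_eq_zero_of_add_mulVec_eq_zero {𝕜 : Type*} [RCLike 𝕜]
    {A B : Matrix ι ι 𝕜} (hA : A.PosSemidef) (hB : B.PosSemidef) {v : ι → 𝕜}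
    (h : (A + B) *ᵥ v = 0) : B *ᵥ v = 0 := by
  rw [← hB.dotProduct_mulVec_zero_iff]
  have hsum : star v ⬝ᵥ A *ᵥ v + star v ⬝ᵥ B *ᵥ v = 0 := by
    rw [← dotProduct_add, ← add_mulVec, h, dotProduct_zero]
  exact ((add_eq_zero_iff_of_nonneg (hA.dotProduct_mulVec_nonneg v)
    (hB.dotProduct_mulVec_nonneg v)).1 hsum).2

-- `D₊` has the eigenvalue property iff `D₊ + H⁻¹ p₀ p₀ᵀ` is positive stable.
def IsPositiveStable (M : Matrix ι ι ℝ) : Prop :=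
  ∀ (μ : ℂ) (w : ι → ℂ), w ≠ 0 → M.map (↑) *ᵥ w = μ • w → 0 < μ.re

end Matrix

lemma exists_posSemidef_mulVec_eq_zero_iff {𝕜 : Type*} [Field 𝕜] [PartialOrder 𝕜] [StarRing 𝕜]
    [StarOrderedRing 𝕜] [DecidableEq ι] (U : Submodule 𝕜 (ι → 𝕜)) :
    ∃ P : Matrix ι ι 𝕜, P.PosSemidef ∧ ∀ v, P *ᵥ v = 0 ↔ v ∈ U := by
  let A := LinearMap.toMatrix'
    ((Module.finBasis 𝕜 ((ι → 𝕜) ⧸ U)).equivFun.toLinearMap ∘ₗ U.mkQ)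
  refine ⟨Aᴴ * A, posSemidef_conjTranspose_mul_self A, fun v => ?_⟩
  rw [← mulVecLin_apply, ← LinearMap.mem_ker, ker_mulVecLin_conjTranspose_mul_self,
    LinearMap.mem_ker, mulVecLin_apply, LinearMap.toMatrix'_mulVec]
  simp [Submodule.Quotient.mk_eq_zero]

lemma exists_pos_norm_smul_le {E : Type*} [SeminormedAddCommGroup E] [NormedSpace ℝ E] (A : E)
    {ε : ℝ} (hε : 0 < ε) : ∃ δ : ℝ, 0 < δ ∧ ‖δ • A‖ ≤ ε := by
  refine ⟨ε / (‖A‖ + 1), by positivity, ?_⟩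
  rw [norm_smul, Real.norm_of_nonneg (by positivity), div_mul_eq_mul_div,
    div_le_iff₀ (by positivity)]
  nlinarith [norm_nonneg A]

def polyGridSpace (x : ι → ℝ) (k : ℕ) : Submodule ℝ (ι → ℝ) :=
  Submodule.span ℝ ((fun j i => x i ^ j) '' Set.Iio k)

section Accuracy

variable {D : Matrix ι ι ℝ} {x : ι → ℝ} {q : ℕ}

lemma mulVec_mem_polyGridSpace
    (hD : ∀ j ≤ q, D *ᵥ (fun i => x i ^ j) = fun i => (j : ℝ) * x i ^ (j - 1))
    {k : ℕ} (hk : k ≤ q) {v : ι → ℝ} (hv : v ∈ polyGridSpace x (k + 1)) :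
    D *ᵥ v ∈ polyGridSpace x k := by
  refine (Submodule.span_le (p := (polyGridSpace x k).comap D.mulVecLin)).2 ?_ hv
  rintro _ ⟨j, hj, rfl⟩
  rw [SetLike.mem_coe, Submodule.mem_comap, mulVecLin_apply,
    hD j ((Nat.lt_succ_iff.mp hj).trans hk)]
  rcases j with _ | j
  · simp only [CharP.cast_eq_zero, zero_mul]
    exact zero_mem _
  · exact Submodule.smul_mem _ ((j + 1 : ℕ) : ℝ)
      (Submodule.subset_span ⟨j, Nat.succ_lt_succ_iff.mp hj, rfl⟩)

lemma pow_mulVec_eq_zero_of_mem_polyGridSpace [DecidableEq ι]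
    (hD : ∀ j ≤ q, D *ᵥ (fun i => x i ^ j) = fun i => (j : ℝ) * x i ^ (j - 1))
    {k : ℕ} (hk : k ≤ q + 1) {v : ι → ℝ} (hv : v ∈ polyGridSpace x k) :
    (D ^ k) *ᵥ v = 0 := by
  induction k generalizing v with
  | zero => simp_all [polyGridSpace]
  | succ k ih =>
    rw [pow_succ, ← mulVec_mulVec]
    exact ih (by omega) (mulVec_mem_polyGridSpace hD (by omega) hv)

lemma eq_zero_of_map_ofReal_mulVec_eq_smul_of_mem_polyGridSpace [DecidableEq ι]
    (hD : ∀ j ≤ q, D *ᵥ (fun i => x i ^ j) = fun i => (j : ℝ) * x i ^ (j - 1))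
    {w : ι → ℂ} (hre : (fun i => (w i).re) ∈ polyGridSpace x (q + 1))
    (him : (fun i => (w i).im) ∈ polyGridSpace x (q + 1))
    {μ : ℂ} (hμ : μ ≠ 0) (h : D.map (↑) *ᵥ w = μ • w) : w = 0 := by
  have hpow : (D ^ (q + 1)).map (↑) *ᵥ w = 0 :=
    (map_ofReal_mulVec_eq_zero_iff _ w).2
      ⟨pow_mulVec_eq_zero_of_mem_polyGridSpace hD le_rfl hre,
        pow_mulVec_eq_zero_of_mem_polyGridSpace hD le_rfl him⟩
  rw [show (D ^ (q + 1)).map ((↑) : ℝ → ℂ) = D.map (↑) ^ (q + 1) from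
    Matrix.map_pow D Complex.ofRealHom _, pow_mulVec_of_mulVec_eq_smul h] at hpow
  exact (smul_eq_zero.1 hpow).resolve_left (pow_ne_zero _ hμ)

end Accuracy

lemma eq_zero_of_mem_span_one_of_vecMulVec_mulVec_eq_zero {p u : ι → ℝ}
    (hp : p ⬝ᵥ (fun _ => 1) = 1) (hu : u ∈ Submodule.span ℝ {fun _ => 1})
    (h : vecMulVec p p *ᵥ u = 0) : u = 0 := by
  obtain ⟨c, rfl⟩ := Submodule.mem_span_singleton.1 hu
  rw [vecMulVec_mulVec, dotProduct_smul, hp, op_smul_eq_smul, smul_eq_mul, mul_one] at h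
  obtain rfl | rfl := smul_eq_zero.1 h
  · exact zero_smul _ _
  · simp at hp

end

namespace IsSBP

variable {n q : ℕ} {a b : ℝ} {Dp Dm H S : Matrix (Fin (n+1)) (Fin (n+1)) ℝ}
  {p0 pn x : Fin (n+1) → ℝ}

theorem add_dissipation (hsbp : IsSBP n q a b Dp Dm H S p0 pn x)
    {S' : Matrix (Fin (n+1)) (Fin (n+1)) ℝ} (hS' : S'.PosSemidef)
    (hS'x : ∀ j ≤ q, S' *ᵥ (fun i => x i ^ j) = 0) :
    IsSBP n q a b (Dp + (2 : ℝ)⁻¹ • (H⁻¹ * S')) (Dm - (2 : ℝ)⁻¹ • (H⁻¹ * S')) H (S + S')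
      p0 pn x := by
  obtain ⟨hDp, hDm, hp0, hpn, hH, hS, hC, hD, hx⟩ := hsbp
  have hdet : IsUnit H.det := hH.det_pos.ne'.isUnit
  have hkill : ∀ j ≤ q, ((2 : ℝ)⁻¹ • (H⁻¹ * S')) *ᵥ (fun i => x i ^ j) = 0 := fun j hj => by
    rw [smul_mulVec, ← mulVec_mulVec, hS'x j hj, mulVec_zero, smul_zero]
  have hleft : H * (H⁻¹ * S') = S' := mul_nonsing_inv_cancel_left _ _ hdet
  have hright : (H⁻¹ * S')ᵀ * H = S' := transpose_nonsing_inv_mul_mul_self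
    (isHermitian_iff_isSymm.1 hH.isHermitian) (isHermitian_iff_isSymm.1 hS'.isHermitian) hdet
  refine ⟨fun j hj => by rw [add_mulVec, hkill j hj, add_zero, hDp j hj],
    fun j hj => by rw [sub_mulVec, hkill j hj, sub_zero, hDm j hj], hp0, hpn, hH, hS.add hS',
    ?_, ?_, hx⟩
  · rw [mul_add, transpose_add, add_mul, transpose_smul, Matrix.mul_smul, Matrix.smul_mul, hleft,
      hright]
    linear_combination (norm := module) hC
  · rw [mul_add, transpose_sub, sub_mul, transpose_smul, Matrix.mul_smul, Matrix.smul_mul, hleft,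
      hright]
    linear_combination (norm := module) hD

theorem lyapunov_eq (hsbp : IsSBP n q a b Dp Dm H S p0 pn x) :
    H * (Dp + H⁻¹ * vecMulVec p0 p0) + (Dp + H⁻¹ * vecMulVec p0 p0)ᵀ * H
      = vecMulVec p0 p0 + vecMulVec pn pn + S := by
  obtain ⟨-, -, -, -, hH, -, hC, -, -⟩ := hsbp
  have hdet : IsUnit H.det := hH.det_pos.ne'.isUnit
  rw [mul_add, transpose_add, add_mul, mul_nonsing_inv_cancel_left _ _ hdet,
    transpose_nonsing_inv_mul_mul_self (isHermitian_iff_isSymm.1 hH.isHermitian)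
      (transpose_vecMulVec p0 p0) hdet]
  linear_combination (norm := module) hC

theorem map_ofReal_mulVec_eq_zero_of_re_nonpos (hsbp : IsSBP n q a b Dp Dm H S p0 pn x)
    {μ : ℂ} {w : Fin (n+1) → ℂ} (h : (Dp + H⁻¹ * vecMulVec p0 p0).map (↑) *ᵥ w = μ • w)
    (hμ : μ.re ≤ 0) : (vecMulVec p0 p0).map (↑) *ᵥ w = 0 ∧ S.map (↑) *ᵥ w = 0 := by
  have hform := re_star_dotProduct_lyapunov_mulVec (H := H) h
  simp only [hsbp.lyapunov_eq, Matrix.map_add _ Complex.ofReal_add, add_mulVec, dotProduct_add,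
    Complex.add_re] at hform
  obtain ⟨-, -, -, -, hH, hS, -, -, -⟩ := hsbp
  have hP0 : (vecMulVec p0 p0).PosSemidef := by
    simpa only [star_trivial] using posSemidef_vecMulVec_self_star p0
  have hPn : (vecMulVec pn pn).PosSemidef := by
    simpa only [star_trivial] using posSemidef_vecMulVec_self_star pn
  have hrhs : 2 * μ.re * (star w ⬝ᵥ H.map (↑) *ᵥ w).re ≤ 0 :=
    mul_nonpos_of_nonpos_of_nonneg (by linarith)
      (hH.posSemidef.re_star_dotProduct_map_ofReal_mulVec_nonneg w)
  have h0 := hP0.re_star_dotProduct_map_ofReal_mulVec_nonneg w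
  have hn := hPn.re_star_dotProduct_map_ofReal_mulVec_nonneg w
  have hs := hS.re_star_dotProduct_map_ofReal_mulVec_nonneg w
  exact ⟨hP0.map_ofReal_mulVec_eq_zero_of_re_nonpos (by linarith),
    hS.map_ofReal_mulVec_eq_zero_of_re_nonpos (by linarith)⟩

theorem isPositiveStable (hsbp : IsSBP n q a b Dp Dm H S p0 pn x)
    (hS : ∀ v, S *ᵥ v = 0 → v ∈ polyGridSpace x (q + 1))
    (hnull : ∀ v ∈ polyGridSpace x (q + 1), Dp *ᵥ v = 0 → v ∈ Submodule.span ℝ {fun _ => 1}) :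
    (Dp + H⁻¹ * vecMulVec p0 p0).IsPositiveStable := by
  intro μ w hw h
  by_contra! hμ
  obtain ⟨hP0w, hSw⟩ := hsbp.map_ofReal_mulVec_eq_zero_of_re_nonpos h hμ
  have hDw : Dp.map (↑) *ᵥ w = μ • w := by
    rwa [Matrix.map_add _ Complex.ofReal_add, map_ofReal_mul, add_mulVec, ← mulVec_mulVec, hP0w,
      mulVec_zero, add_zero] at h
  obtain ⟨hSre, hSim⟩ := (map_ofReal_mulVec_eq_zero_iff S w).1 hSw
  obtain ⟨hDp, -, hp0, -⟩ := hsbp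
  rcases eq_or_ne μ 0 with rfl | hμ0
  · rw [zero_smul, map_ofReal_mulVec_eq_zero_iff] at hDw
    rw [map_ofReal_mulVec_eq_zero_iff] at hP0w
    have hp : p0 ⬝ᵥ (fun _ => 1) = 1 := by simpa using hp0 0 (Nat.zero_le q)
    have hre := eq_zero_of_mem_span_one_of_vecMulVec_mulVec_eq_zero hp
      (hnull _ (hS _ hSre) hDw.1) hP0w.1
    have him := eq_zero_of_mem_span_one_of_vecMulVec_mulVec_eq_zero hp
      (hnull _ (hS _ hSim) hDw.2) hP0w.2
    exact hw (funext fun i => Complex.ext (congrFun hre i) (congrFun him i))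
  · exact hw (eq_zero_of_map_ofReal_mulVec_eq_smul_of_mem_polyGridSpace hDp (hS _ hSre)
      (hS _ hSim) hμ0 hDw)

end IsSBP

open scoped Matrix.Norms.L2Operator in
theorem sbp_perturbation_restores_eigenvalue_property_general {n q : ℕ}
    {a b : ℝ}
    (Dp Dm H S : Matrix (Fin (n+1)) (Fin (n+1)) ℝ) (p0 pn x : Fin (n+1) → ℝ)
    (hsbp : IsSBP n q a b Dp Dm H S p0 pn x)
    (hnull : LinearMap.ker Dp.mulVecLin = Submodule.span ℝ {(fun _ => 1 : Fin (n+1) → ℝ)}) :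
    ∀ ε : ℝ, 0 < ε → ∃ S' : Matrix (Fin (n+1)) (Fin (n+1)) ℝ,
      S'.PosSemidef ∧
      (∀ j : ℕ, j ≤ q → S'.mulVec (fun i => x i ^ j) = 0) ∧
      ‖(Dp + (2 : ℝ)⁻¹ • (H⁻¹ * S')) - Dp‖ ≤ ε ∧
      (∀ (lam : ℂ) (w : Fin (n+1) → ℂ), w ≠ 0 →
        (((Dp + (2 : ℝ)⁻¹ • (H⁻¹ * S')) + H⁻¹ * vecMulVec p0 p0).map
          (fun r => (r : ℂ))).mulVec w = lam • w →
        0 < lam.re) ∧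
      IsSBP n q a b (Dp + (2 : ℝ)⁻¹ • (H⁻¹ * S')) (Dm - (2 : ℝ)⁻¹ • (H⁻¹ * S'))
        H (S + S') p0 pn x := by
  intro ε hε
  obtain ⟨P, hP, hPker⟩ := exists_posSemidef_mulVec_eq_zero_iff (polyGridSpace x (q + 1))
  obtain ⟨δ, hδ, hδε⟩ := exists_pos_norm_smul_le ((2 : ℝ)⁻¹ • (H⁻¹ * P)) hε
  have hS'ker : ∀ v, (δ • P) *ᵥ v = 0 ↔ v ∈ polyGridSpace x (q + 1) := fun v => by
    rw [smul_mulVec, smul_eq_zero, or_iff_right hδ.ne', hPker]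
  have hS'x : ∀ j ≤ q, (δ • P) *ᵥ (fun i => x i ^ j) = 0 := fun j hj =>
    (hS'ker _).2 (Submodule.subset_span ⟨j, Nat.lt_succ_of_le hj, rfl⟩)
  have hsbp' := hsbp.add_dissipation (hP.smul hδ.le) hS'x
  have hS : S.PosSemidef := hsbp.2.2.2.2.2.1
  refine ⟨δ • P, hP.smul hδ.le, hS'x, ?_,
    hsbp'.isPositiveStable (fun v hv => ?_) fun v hv hDv => ?_, hsbp'⟩
  · rwa [add_sub_cancel_left, Matrix.mul_smul, smul_comm]
  · exact (hS'ker v).1 (hS.mulVec_eq_zero_of_add_mulVec_eq_zero (hP.smul hδ.le) hv)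
  · rw [add_mulVec, smul_mulVec, ← mulVec_mulVec, (hS'ker v).2 hv, mulVec_zero, smul_zero,
      add_zero] at hDv
    exact hnull ▸ hDv

open scoped Matrix.Norms.L2Operator in
/-- a nullspace consistent SBP operator lacking the eigenvalue property can be
perturbed by an arbitrarily small dissipation term `(1/2)H⁻¹S'` so that the perturbed operator
is again an SBP operator of order `q` and has the eigenvalue property. -/
theorem sbp_perturbation_restores_eigenvalue_property {n q : ℕ} (hn : 1 ≤ n) (hq : 1 ≤ q)
    {a b : ℝ} (hab : a < b)
    (Dp Dm H S : Matrix (Fin (n+1)) (Fin (n+1)) ℝ) (p0 pn x : Fin (n+1) → ℝ)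
    (hsbp : IsSBP n q a b Dp Dm H S p0 pn x)
    (hnull : LinearMap.ker Dp.mulVecLin = Submodule.span ℝ {(fun _ => 1 : Fin (n+1) → ℝ)})
    (hbad : ¬ (∀ (lam : ℂ) (w : Fin (n+1) → ℂ), w ≠ 0 →
      ((Dp + H⁻¹ * vecMulVec p0 p0).map (fun r => (r : ℂ))).mulVec w = lam • w →
      0 < lam.re)) :
    ∀ ε : ℝ, 0 < ε → ∃ S' : Matrix (Fin (n+1)) (Fin (n+1)) ℝ,
      S'.PosSemidef ∧
      (∀ j : ℕ, j ≤ q → S'.mulVec (fun i => x i ^ j) = 0) ∧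
      ‖(Dp + (2 : ℝ)⁻¹ • (H⁻¹ * S')) - Dp‖ ≤ ε ∧
      (∀ (lam : ℂ) (w : Fin (n+1) → ℂ), w ≠ 0 →
        (((Dp + (2 : ℝ)⁻¹ • (H⁻¹ * S')) + H⁻¹ * vecMulVec p0 p0).map
          (fun r => (r : ℂ))).mulVec w = lam • w →
        0 < lam.re) ∧
      IsSBP n q a b (Dp + (2 : ℝ)⁻¹ • (H⁻¹ * S')) (Dm - (2 : ℝ)⁻¹ • (H⁻¹ * S'))
        H (S + S') p0 pn x :=
  sbp_perturbation_restores_eigenvalue_property_general Dp Dm H S p0 pn x hsbp hnull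
end

section
/- Let x ∈ ℝ^{n+1} have pairwise distinct entries and let D be a real (n+1)×(n+1) matrix satisfying D xʲ = j xʲ⁻¹ for all j = 0, …, n. Then ker D = span{1}, where 1 is the all-ones vector; i.e., every pseudospectral operator is nullspace consistent. -/
open Matrix

/-- every pseudospectral operator is nullspace consistent:
`ker D = span{1}`. -/
theorem pseudospectral_nullspace_consistent {n : ℕ} (x : Fin (n+1) → ℝ)
    (hx : Function.Injective x)
    (D : Matrix (Fin (n+1)) (Fin (n+1)) ℝ)
    (hD : ∀ j : ℕ, j ≤ n → D.mulVec (fun i => x i ^ j) = fun i => (j : ℝ) * x i ^ (j - 1)) :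
    LinearMap.ker D.mulVecLin = Submodule.span ℝ {(fun _ => 1 : Fin (n+1) → ℝ)} := by
  -- columns of the Vandermonde matrix are linearly independent
  have hdet : (Matrix.vandermonde x).det ≠ 0 := Matrix.det_vandermonde_ne_zero_iff.2 hx
  have hunit : IsUnit (Matrix.vandermonde x) :=
    (Matrix.isUnit_iff_isUnit_det _).2 (IsUnit.mk0 _ hdet)
  have hli : LinearIndependent ℝ (fun j : Fin (n+1) => fun i => x i ^ (j : ℕ)) := by
    exact Matrix.linearIndependent_cols_iff_isUnit.2 hunit
  -- span {1} ≤ ker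
  have h1 : (fun _ => (1:ℝ) : Fin (n+1) → ℝ) ∈ LinearMap.ker D.mulVecLin := by
    have h0 := hD 0 (Nat.zero_le n)
    simp only [pow_zero, Nat.cast_zero, zero_mul] at h0
    rw [LinearMap.mem_ker, Matrix.mulVecLin_apply]; exact h0
  have hle : Submodule.span ℝ {(fun _ => 1 : Fin (n+1) → ℝ)} ≤ LinearMap.ker D.mulVecLin :=
    Submodule.span_le.2 (by simpa using h1)
  -- the first n powers are in the range of D
  have hmem : ∀ k : Fin n, (fun i => x i ^ (k : ℕ)) ∈ LinearMap.range D.mulVecLin := by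
    intro k
    have hk : (k : ℕ) + 1 ≤ n := k.2
    have h := hD ((k : ℕ) + 1) hk
    refine ⟨(((k : ℕ) + 1 : ℝ))⁻¹ • (fun i => x i ^ ((k : ℕ) + 1)), ?_⟩
    have hne : (((k : ℕ) + 1 : ℝ)) ≠ 0 := by positivity
    rw [_root_.map_smul]
    rw [Matrix.mulVecLin_apply, h]
    funext i
    simp only [Pi.smul_apply, Nat.add_sub_cancel, smul_eq_mul, Nat.cast_add, Nat.cast_one]
    field_simp
  -- hence the range has dimension ≥ n
  have hli' : LinearIndependent ℝ (fun k : Fin n =>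
      (⟨fun i => x i ^ (k : ℕ), hmem k⟩ : LinearMap.range D.mulVecLin)) := by
    have hcomp : LinearIndependent ℝ
        (fun k : Fin n => fun i => x i ^ ((Fin.castSucc k : Fin (n+1)) : ℕ)) :=
      hli.comp Fin.castSucc (Fin.castSucc_injective n)
    exact LinearIndependent.of_comp (LinearMap.range D.mulVecLin).subtype hcomp
  have hrange : n ≤ Module.finrank ℝ (LinearMap.range D.mulVecLin) := by
    simpa using hli'.fintype_card_le_finrank
  have hrn := LinearMap.finrank_range_add_finrank_ker D.mulVecLin
  have htot : Module.finrank ℝ (Fin (n+1) → ℝ) = n + 1 := by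
    simp [Module.finrank_pi]
  have hker : Module.finrank ℝ (LinearMap.ker D.mulVecLin) ≤ 1 := by omega
  have hone : (fun _ => 1 : Fin (n+1) → ℝ) ≠ 0 := by
    intro h
    have := congrFun h 0
    simp at this
  have hspan : Module.finrank ℝ (Submodule.span ℝ {(fun _ => 1 : Fin (n+1) → ℝ)}) = 1 :=
    finrank_span_singleton hone
  exact (Submodule.eq_of_le_of_finrank_le hle (by omega)).symm
end

section
/- Let D₊, D₋, H, S, p₀, pₙ, x form a pair of SBP operators of order q = n on [a,b] (a pseudospectral method), and set D̃₊ := D₊ + H⁻¹ p₀ p₀ᵀ. Then every eigenvalue λ ∈ ℂ of the complexification of D̃₊ satisfies Re(λ) > 0; i.e., every pseudospectral SBP operator has the eigenvalue property. -/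
open Matrix

namespace SBPAux

variable {m : Type*} [Fintype m]

lemma mulVec_vecMulVec' (a b w : m → ℂ) : (vecMulVec a b) *ᵥ w = (b ⬝ᵥ w) • a := by
  funext i
  simp only [vecMulVec_apply, mulVec, dotProduct, Pi.smul_apply, smul_eq_mul, Finset.sum_mul]
  exact Finset.sum_congr rfl fun j _ => by ring

lemma mulVec_star_real (A : Matrix m m ℝ) (w : m → ℂ) :
    (A.map (fun r => (r:ℂ))) *ᵥ (star w) = star ((A.map (fun r => (r:ℂ))) *ᵥ w) := by
  funext j
  simp only [mulVec, dotProduct, Pi.star_apply, map_apply, star_sum, star_mul',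
    Complex.star_def, Complex.conj_ofReal]

lemma expand_quad (A : Matrix m m ℝ) (w : m → ℂ) :
    star w ⬝ᵥ (A.map (fun r => (r:ℂ))) *ᵥ w
      = ∑ i, ∑ j, (A i j : ℂ) * (star (w i) * w j) := by
  simp only [dotProduct, mulVec, map_apply, Pi.star_apply, Finset.mul_sum]
  exact Finset.sum_congr rfl fun i _ => Finset.sum_congr rfl fun j _ => by ring

lemma quad_real (A : Matrix m m ℝ) (hA : ∀ i j, A i j = A j i) (w : m → ℂ) :
    star w ⬝ᵥ (A.map (fun r => (r:ℂ))) *ᵥ w =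
      (((fun i => (w i).re) ⬝ᵥ A *ᵥ (fun i => (w i).re)
        + (fun i => (w i).im) ⬝ᵥ A *ᵥ (fun i => (w i).im) : ℝ) : ℂ) := by
  rw [expand_quad]
  apply Complex.ext
  · simp only [Complex.re_sum, Complex.mul_re, Complex.ofReal_re, Complex.ofReal_im,
      Complex.mul_im, Complex.star_def, Complex.conj_re, Complex.conj_im,
      Complex.add_re, Complex.ofReal_re]
    simp only [dotProduct, mulVec, Finset.mul_sum]
    rw [← Finset.sum_add_distrib]
    refine Finset.sum_congr rfl fun i _ => ?_
    rw [← Finset.sum_add_distrib]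
    refine Finset.sum_congr rfl fun j _ => by ring
  · simp only [Complex.im_sum, Complex.mul_im, Complex.ofReal_re, Complex.ofReal_im,
      Complex.mul_re, Complex.star_def, Complex.conj_re, Complex.conj_im, Complex.ofReal_im]
    have h1 : ∑ i, ∑ j, A i j * ((w i).im * (w j).re)
        = ∑ i, ∑ j, A i j * ((w i).re * (w j).im) := by
      rw [Finset.sum_comm]
      exact Finset.sum_congr rfl fun i _ => Finset.sum_congr rfl fun j _ => by
        rw [hA j i]; ring
    have key : ∑ i : m, ∑ j : m,
        (A i j * ((w i).re * (w j).im + -(w i).im * (w j).re) +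
          0 * ((w i).re * (w j).re - -(w i).im * (w j).im)) =
        (∑ i : m, ∑ j : m, A i j * ((w i).re * (w j).im))
          - ∑ i : m, ∑ j : m, A i j * ((w i).im * (w j).re) := by
      rw [← Finset.sum_sub_distrib]
      refine Finset.sum_congr rfl fun i _ => ?_
      rw [← Finset.sum_sub_distrib]
      exact Finset.sum_congr rfl fun j _ => by ring
    rw [key, h1, sub_self]

lemma star_dot_real (p : m → ℝ) (w : m → ℂ) :
    star w ⬝ᵥ (fun i => (p i : ℂ)) = star ((fun i => (p i : ℂ)) ⬝ᵥ w) := by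
  simp only [dotProduct, Pi.star_apply, star_sum, star_mul', Complex.star_def,
    Complex.conj_ofReal]
  exact Finset.sum_congr rfl fun j _ => by ring

end SBPAux

open SBPAux

/-- every pseudospectral SBP operator (an SBP operator of order `q = n`) has the
eigenvalue property: every eigenvalue of `D̃₊ = D₊ + H⁻¹ p₀ p₀ᵀ` has positive real part. -/
theorem pseudospectral_eigenvalue_property {n : ℕ} (hn : 1 ≤ n) {a b : ℝ} (hab : a < b)
    (Dp Dm H S : Matrix (Fin (n+1)) (Fin (n+1)) ℝ) (p0 pn x : Fin (n+1) → ℝ)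
    (hsbp : IsSBP n n a b Dp Dm H S p0 pn x) :
    ∀ (lam : ℂ) (w : Fin (n+1) → ℂ), w ≠ 0 →
      ((Dp + H⁻¹ * vecMulVec p0 p0).map (fun r => (r : ℂ))).mulVec w = lam • w →
      0 < lam.re := by
  intro lam w hw hev
  obtain ⟨hDp, -, hp0, -, hH, hS, hC, -, hx⟩ := hsbp
  by_contra hcon
  push_neg at hcon
  set P0 : Matrix (Fin (n+1)) (Fin (n+1)) ℝ := vecMulVec p0 p0 with hP0def
  set Dt : Matrix (Fin (n+1)) (Fin (n+1)) ℝ := Dp + H⁻¹ * P0 with hDtdef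
  have hHdet : IsUnit H.det := isUnit_iff_ne_zero.mpr hH.det_pos.ne'
  have hHsymm : Hᵀ = H := by rw [← conjTranspose_eq_transpose_of_trivial]; exact hH.1
  have hSsymm : ∀ i j, S i j = S j i := fun i j => by
    conv_lhs => rw [← hS.1]
    simp [conjTranspose_apply]
  have hHsymm' : ∀ i j, H i j = H j i := fun i j => by
    conv_lhs => rw [← hHsymm]
    rfl
  have hP0symm : P0ᵀ = P0 := by
    ext i j; simp [hP0def, vecMulVec_apply, mul_comm]
  have hHinvsymm : (H⁻¹)ᵀ = H⁻¹ := by rw [transpose_nonsing_inv, hHsymm]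
  -- key real matrix identity
  have hkey : H * Dt + Dtᵀ * H = P0 + vecMulVec pn pn + S := by
    have hmul1 : H * (H⁻¹ * P0) = P0 := by
      rw [← mul_assoc, mul_nonsing_inv _ hHdet, one_mul]
    have hmul2 : (H⁻¹ * P0)ᵀ * H = P0 := by
      rw [transpose_mul, hHinvsymm, hP0symm, mul_assoc, nonsing_inv_mul _ hHdet, mul_one]
    calc H * Dt + Dtᵀ * H
        = (H * Dp + Dpᵀ * H) + (H * (H⁻¹ * P0) + (H⁻¹ * P0)ᵀ * H) := by
          rw [hDtdef, transpose_add, mul_add, add_mul]; abel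
      _ = (-P0 + vecMulVec pn pn + S) + (P0 + P0) := by rw [hC, hmul1, hmul2]
      _ = P0 + vecMulVec pn pn + S := by abel
  -- complexification
  set u : Fin (n+1) → ℝ := fun i => (w i).re with hudef
  set v : Fin (n+1) → ℝ := fun i => (w i).im with hvdef
  set p0c : Fin (n+1) → ℂ := fun i => (p0 i : ℂ) with hp0cdef
  set pnc : Fin (n+1) → ℂ := fun i => (pn i : ℂ) with hpncdef
  set d0 : ℂ := p0c ⬝ᵥ w with hd0def
  set dn : ℂ := pnc ⬝ᵥ w with hdndef
  set qr : ℝ := u ⬝ᵥ H *ᵥ u + v ⬝ᵥ H *ᵥ v with hqrdef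
  set sr : ℝ := u ⬝ᵥ S *ᵥ u + v ⬝ᵥ S *ᵥ v with hsrdef
  have hmapRH : ∀ (A : Matrix (Fin (n+1)) (Fin (n+1)) ℝ),
      A.map (fun r => (r:ℂ)) = A.map (Complex.ofRealHom : ℝ →+* ℂ) := fun A => rfl
  have hq : star w ⬝ᵥ (H.map (fun r => (r:ℂ))) *ᵥ w = (qr : ℂ) := quad_real H hHsymm' w
  have hqpos : 0 < qr := by
    have huv : u ≠ 0 ∨ v ≠ 0 := by
      by_contra h
      push_neg at h
      apply hw
      funext i
      have h1 := congrFun h.1 i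
      have h2 := congrFun h.2 i
      simp only [hudef, hvdef, Pi.zero_apply] at h1 h2
      exact Complex.ext h1 h2
    have hu' : 0 ≤ u ⬝ᵥ H *ᵥ u := by
      have := hH.posSemidef.dotProduct_mulVec_nonneg u; simpa using this
    have hv' : 0 ≤ v ⬝ᵥ H *ᵥ v := by
      have := hH.posSemidef.dotProduct_mulVec_nonneg v; simpa using this
    rcases huv with h | h
    · have := hH.dotProduct_mulVec_pos h; simp only [star_trivial] at this; rw [hqrdef]; linarith
    · have := hH.dotProduct_mulVec_pos h; simp only [star_trivial] at this; rw [hqrdef]; linarith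
  have hsnn : 0 ≤ sr := by
    have h1 := hS.dotProduct_mulVec_nonneg u; have h2 := hS.dotProduct_mulVec_nonneg v
    simp only [star_trivial] at h1 h2
    rw [hsrdef]; linarith
  -- quadratic form identity
  have hP0map : P0.map (fun r => (r:ℂ)) = vecMulVec p0c p0c := by
    ext i j; simp [hP0def, vecMulVec_apply, hp0cdef]
  have hPnmap : (vecMulVec pn pn).map (fun r => (r:ℂ)) = vecMulVec pnc pnc := by
    ext i j; simp [vecMulVec_apply, hpncdef]
  have hT1 : star w ⬝ᵥ ((H * Dt).map (fun r => (r:ℂ))) *ᵥ w = lam * (qr:ℂ) := by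
    rw [hmapRH, Matrix.map_mul, ← mulVec_mulVec, ← hmapRH (Dt), ← hmapRH H, hev,
      mulVec_smul, dotProduct_smul, smul_eq_mul, hq]
  have hT2 : star w ⬝ᵥ ((Dtᵀ * H).map (fun r => (r:ℂ))) *ᵥ w = star lam * (qr:ℂ) := by
    rw [hmapRH, Matrix.map_mul, ← mulVec_mulVec, ← hmapRH, ← hmapRH, dotProduct_mulVec]
    have htr : (Dtᵀ).map (fun r => (r:ℂ)) = ((Dt.map (fun r => (r:ℂ)))ᵀ) := by
      ext i j; simp [map_apply, transpose_apply]
    rw [htr, vecMul_transpose, mulVec_star_real Dt w, hev, star_smul, smul_dotProduct,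
      smul_eq_mul, hq]
  have hRp0 : star w ⬝ᵥ (P0.map (fun r => (r:ℂ))) *ᵥ w = (Complex.normSq d0 : ℂ) := by
    rw [hP0map, mulVec_vecMulVec', dotProduct_smul, smul_eq_mul, star_dot_real p0 w,
      ← hp0cdef, ← hd0def]
    exact Complex.mul_conj d0
  have hRpn : star w ⬝ᵥ ((vecMulVec pn pn).map (fun r => (r:ℂ))) *ᵥ w
      = (Complex.normSq dn : ℂ) := by
    rw [hPnmap, mulVec_vecMulVec', dotProduct_smul, smul_eq_mul, star_dot_real pn w,
      ← hpncdef, ← hdndef]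
    exact Complex.mul_conj dn
  have hRS : star w ⬝ᵥ (S.map (fun r => (r:ℂ))) *ᵥ w = (sr : ℂ) := quad_real S hSsymm w
  -- main scalar identity
  have hmain : 2 * lam.re * qr = Complex.normSq d0 + Complex.normSq dn + sr := by
    have hL : star w ⬝ᵥ ((H * Dt + Dtᵀ * H).map (fun r => (r:ℂ))) *ᵥ w
        = lam * (qr:ℂ) + star lam * (qr:ℂ) := by
      have hadd : (H * Dt + Dtᵀ * H).map (fun r => (r:ℂ))
          = (H * Dt).map (fun r => (r:ℂ)) + (Dtᵀ * H).map (fun r => (r:ℂ)) := by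
        ext i j; simp [map_apply]
      rw [hadd, add_mulVec, dotProduct_add, hT1, hT2]
    have hR : star w ⬝ᵥ ((P0 + vecMulVec pn pn + S).map (fun r => (r:ℂ))) *ᵥ w
        = (Complex.normSq d0 : ℂ) + (Complex.normSq dn : ℂ) + (sr : ℂ) := by
      have hadd : (P0 + vecMulVec pn pn + S).map (fun r => (r:ℂ))
          = P0.map (fun r => (r:ℂ)) + (vecMulVec pn pn).map (fun r => (r:ℂ))
            + S.map (fun r => (r:ℂ)) := by
        ext i j; simp [map_apply]
      rw [hadd, add_mulVec, add_mulVec, dotProduct_add, dotProduct_add, hRp0, hRpn, hRS]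
    rw [hkey] at hL
    rw [hL] at hR
    have hstar : lam * (qr:ℂ) + star lam * (qr:ℂ) = 2 * (lam.re:ℂ) * (qr:ℂ) := by
      rw [Complex.star_def]
      have hconj := Complex.add_conj lam
      calc lam * (qr:ℂ) + (starRingEnd ℂ) lam * (qr:ℂ)
          = (lam + (starRingEnd ℂ) lam) * (qr:ℂ) := by ring
        _ = 2 * (lam.re:ℂ) * (qr:ℂ) := by rw [hconj]; push_cast; ring
    rw [hstar] at hR
    have hcast : ((2 * lam.re * qr : ℝ) : ℂ)
        = ((Complex.normSq d0 + Complex.normSq dn + sr : ℝ) : ℂ) := by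
      push_cast
      exact hR
    exact_mod_cast hcast
  -- conclude d0 = 0
  have hd0zero : d0 = 0 := by
    have h1 : 0 ≤ Complex.normSq d0 := Complex.normSq_nonneg _
    have h2 : 0 ≤ Complex.normSq dn := Complex.normSq_nonneg _
    have h3 : 2 * lam.re * qr ≤ 0 := by nlinarith
    have : Complex.normSq d0 = 0 := by nlinarith
    exact Complex.normSq_eq_zero.mp this
  -- reduce eigen equation to Dp
  have hev' : (Dp.map (fun r => (r:ℂ))) *ᵥ w = lam • w := by
    have hsplit : (Dt.map (fun r => (r:ℂ)))
        = Dp.map (fun r => (r:ℂ)) + (H⁻¹.map (fun r => (r:ℂ))) * (P0.map (fun r => (r:ℂ))) := by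
      ext i j
      simp only [hDtdef, map_apply, Matrix.add_apply, Matrix.mul_apply]
      push_cast
      rfl
    rw [hsplit, add_mulVec, ← mulVec_mulVec, hP0map, mulVec_vecMulVec', ← hd0def,
      hd0zero, zero_smul, mulVec_zero, add_zero] at hev
    exact hev
  -- Vandermonde
  set xc : Fin (n+1) → ℂ := fun i => (x i : ℂ) with hxcdef
  set V : Matrix (Fin (n+1)) (Fin (n+1)) ℂ := vandermonde xc with hVdef
  have hVdet : IsUnit V.det := by
    rw [hVdef, det_vandermonde]
    apply isUnit_iff_ne_zero.mpr
    rw [Finset.prod_ne_zero_iff]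
    intro i _
    rw [Finset.prod_ne_zero_iff]
    intro j hj
    have hne : x j ≠ x i := fun h => (Finset.mem_Ioi.mp hj).ne' (hx h)
    simpa [hxcdef, sub_eq_zero] using fun h => hne (by exact_mod_cast h)
  set c : Fin (n+1) → ℂ := V⁻¹ *ᵥ w with hcdef
  have hwc : V *ᵥ c = w := by
    rw [hcdef, mulVec_mulVec, mul_nonsing_inv _ hVdet, one_mulVec]
  set N : Matrix (Fin (n+1)) (Fin (n+1)) ℂ :=
    Matrix.of (fun j k : Fin (n+1) => if (j:ℕ)+1 = (k:ℕ) then ((k:ℕ):ℂ) else 0) with hNdef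
  have hDV : (Dp.map (fun r => (r:ℂ))) * V = V * N := by
    ext i k
    have hcol := congrFun (hDp (k:ℕ) (Nat.lt_succ_iff.mp k.isLt)) i
    simp only [mulVec, dotProduct] at hcol
    have hL : ((Dp.map (fun r => (r:ℂ))) * V) i k
        = (((k:ℕ) : ℝ) * x i ^ ((k:ℕ) - 1) : ℝ) := by
      rw [Matrix.mul_apply, ← hcol]
      push_cast
      exact Finset.sum_congr rfl fun j _ => by simp [hVdef, hxcdef, vandermonde_apply]
    rw [hL, Matrix.mul_apply]
    rcases k with ⟨kv, hk⟩
    match kv with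
    | 0 =>
      simp [hNdef, hVdef]
    | m+1 =>
      have hm : m < n + 1 := by omega
      rw [Finset.sum_eq_single (⟨m, hm⟩ : Fin (n+1))]
      · simp only [hNdef, hVdef, vandermonde_apply, Matrix.of_apply, hxcdef]
        norm_num
        push_cast
        ring
      · intro j _ hj
        have hne : (j:ℕ) + 1 ≠ m + 1 := by
          intro h
          exact hj (Fin.ext (show (j:ℕ) = m by omega))
        have hne' : (j:ℕ) ≠ m := by omega
        simp [hNdef, hne, hne']
      · intro h
        exact absurd (Finset.mem_univ _) h
  have hNc : N *ᵥ c = lam • c := by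
    have h1 : V *ᵥ (N *ᵥ c) = V *ᵥ (lam • c) := by
      rw [mulVec_mulVec, ← hDV, ← mulVec_mulVec, hwc, hev', mulVec_smul, hwc]
    have h2 := congrArg (fun z => V⁻¹ *ᵥ z) h1
    simpa only [mulVec_mulVec, ← Matrix.mul_assoc, nonsing_inv_mul _ hVdet,
      Matrix.one_mul, one_mulVec] using h2
  have hstep : ∀ i : Fin n, (((i:ℕ):ℂ)+1) * c i.succ = lam * c i.castSucc := by
    intro i
    have h := congrFun hNc i.castSucc
    rw [mulVec, dotProduct] at h
    rw [Finset.sum_eq_single i.succ] at h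
    · have hcond : (i.castSucc : ℕ) + 1 = (i.succ : ℕ) := by simp
      rw [show N i.castSucc i.succ = (((i.succ:ℕ)):ℂ) by simp [hNdef, hcond]] at h
      simpa [Fin.val_succ] using h
    · intro k _ hk
      have hne : (i : ℕ) + 1 ≠ (k : ℕ) := by
        intro hcc
        apply hk
        apply Fin.ext
        simp only [Fin.val_succ]
        omega
      simp [hNdef, Fin.coe_castSucc, hne]
    · intro h
      exact absurd (Finset.mem_univ _) h
  have hlastrel : lam * c (Fin.last n) = 0 := by
    have h := congrFun hNc (Fin.last n)
    rw [mulVec, dotProduct, Finset.sum_eq_zero] at h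
    · simpa using h.symm
    · intro k _
      have hne : n + 1 ≠ (k : ℕ) := by
        have := k.isLt
        omega
      simp [hNdef, Fin.val_last, hne]
  by_cases hlam0 : lam = 0
  · have hc1 : ∀ i : Fin n, c i.succ = 0 := by
      intro i
      have h := hstep i
      rw [hlam0, zero_mul] at h
      have hne : (((i:ℕ):ℂ)+1) ≠ 0 := Nat.cast_add_one_ne_zero (i:ℕ)
      exact (mul_eq_zero.mp h).resolve_left hne
    have hwconst : ∀ i, w i = c 0 := by
      intro i
      rw [← hwc, mulVec, dotProduct, Finset.sum_eq_single (0 : Fin (n+1))]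
      · simp [hVdef, vandermonde_apply]
      · intro k _ hk
        rcases Fin.eq_zero_or_eq_succ k with rfl | ⟨j, rfl⟩
        · exact absurd rfl hk
        · rw [hc1 j, mul_zero]
      · intro h
        exact absurd (Finset.mem_univ _) h
    have hdot1 : p0c ⬝ᵥ w = c 0 := by
      rw [dotProduct]
      have hterm : ∀ i, p0c i * w i = p0c i * c 0 := fun i => by rw [hwconst i]
      rw [Finset.sum_congr rfl (fun i _ => hterm i), ← Finset.sum_mul]
      have hone : (∑ i, p0c i) = 1 := by
        have h0 := hp0 0 (Nat.zero_le n)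
        simp only [pow_zero, dotProduct, mul_one] at h0
        rw [hp0cdef]
        rw [← Complex.ofReal_sum]
        exact_mod_cast congrArg (fun r : ℝ => (r:ℂ)) h0
      rw [hone, one_mul]
    have hc0 : c 0 = 0 := by rw [← hdot1, ← hd0def]; exact hd0zero
    apply hw
    funext i
    rw [hwconst i, hc0]
    rfl
  · have hczero : ∀ j, c j = 0 := by
      intro j
      induction j using Fin.reverseInduction with
      | last => exact (mul_eq_zero.mp hlastrel).resolve_left hlam0
      | cast i ih =>
        have h := hstep i
        rw [ih, mul_zero] at h
        exact (mul_eq_zero.mp h.symm).resolve_left hlam0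
    apply hw
    rw [← hwc]
    funext i
    simp [mulVec, dotProduct, hczero]
end
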